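/- arXiv:2512.08496 — 7 statements merged into one kernel-verified Lean document; each statement's English description precedes it below -/
import Mathlib

section
/- Let Z₁ and Z₂ be independent standard Gaussian random variables, let ρ ∈ [−1,1], and set Y := ρZ₁ + √(1−ρ²)Z₂. Then for all natural numbers p, q: E[He_p(Z₁)·He_q(Y)] = q!·ρ^q if p = q, and E[He_p(Z₁)·He_q(Y)] = 0 if p ≠ q. -/
/-!
Write `Y = ρ Z₁ + β Z₂` with `β = √(1 - ρ²)`. Gaussian integration by parts in `Z₂` shows that
`x ↦ E[He_q(ρ x + β Z₂)]` satisfies the Hermite recurrence scaled by `ρ`, so it equals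
`ρ^q He_q(x)` (here `ρ² + β² = 1` is what makes the derivative terms recombine). Conditioning
on `Z₁` thus gives `E[He_p(Z₁) He_q(Y)] = ρ^q E[He_p(Z₁) He_q(Z₁)]`, and the latter is `q! δ_pq`
by the orthogonality of Hermite polynomials, again a consequence of integration by parts:
`E[He_{n+1}(Z) P(Z)] = E[He_n(Z) P'(Z)]`.
-/

open MeasureTheory ProbabilityTheory Filter Set
open scoped Topology

/-- The probabilists' Hermite polynomials. -/
noncomputable def He : ℕ → ℝ → ℝ
  | 0 => fun _ => 1
  | 1 => fun z => z
  | (n + 2) => fun z => z * He (n + 1) z - (n + 1 : ℝ) * He n z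

open Polynomial
open scoped NNReal

theorem Polynomial.derivative_hermite_succ (n : ℕ) :
    derivative (hermite (n + 1)) = (n + 1 : ℤ[X]) * hermite n := by
  induction n with
  | zero => simp
  | succ n ih =>
    rw [hermite_succ (n + 1), derivative_sub, derivative_mul, ih, derivative_X, one_mul,
      derivative_mul, hermite_succ n]
    simp only [derivative_add, derivative_natCast, derivative_one]
    push_cast
    ring

theorem hasDerivAt_gaussianPDFReal (μ : ℝ) (v : ℝ≥0) (x : ℝ) :
    HasDerivAt (gaussianPDFReal μ v) (-(x - μ) / v * gaussianPDFReal μ v x) x := by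
  have h : HasDerivAt (fun y : ℝ => -(y - μ) ^ 2 / (2 * (v : ℝ))) (-(x - μ) / v) x :=
    ((((hasDerivAt_id x).sub_const μ).pow 2).neg.div_const _).congr_deriv (by simp; ring)
  rw [gaussianPDFReal_def]
  exact (h.exp.const_mul _).congr_deriv (by beta_reduce; ring)

theorem integrable_gaussianReal_iff {μ : ℝ} {v : ℝ≥0} (hv : v ≠ 0) {f : ℝ → ℝ} :
    Integrable f (gaussianReal μ v) ↔ Integrable (fun x => gaussianPDFReal μ v x * f x) := by
  rw [gaussianReal_of_var_ne_zero μ hv,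
    integrable_withDensity_iff_integrable_smul' (measurable_gaussianPDF μ v)
      (ae_of_all _ fun _ => gaussianPDF_lt_top)]
  simp_rw [toReal_gaussianPDF, smul_eq_mul]

theorem integral_sub_mul_eq_mul_integral_deriv_gaussianReal {μ : ℝ} {v : ℝ≥0} (hv : v ≠ 0)
    {f f' : ℝ → ℝ} (hf : ∀ x, HasDerivAt f (f' x) x) (hf_int : Integrable f (gaussianReal μ v))
    (hxf_int : Integrable (fun x => (x - μ) * f x) (gaussianReal μ v))
    (hf'_int : Integrable f' (gaussianReal μ v)) :
    ∫ x, (x - μ) * f x ∂gaussianReal μ v = v * ∫ x, f' x ∂gaussianReal μ v := by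
  set φ := gaussianPDFReal μ v
  rw [integrable_gaussianReal_iff hv] at hf_int hxf_int hf'_int
  have hv' : (v : ℝ) ≠ 0 := NNReal.coe_ne_zero.2 hv
  have hibp := integral_mul_deriv_eq_deriv_mul_of_integrable (u := f) (v := φ)
    (fun x _ => hf x) (fun x _ => hasDerivAt_gaussianPDFReal μ v x)
    ((hxf_int.div_const (-(v : ℝ))).congr
      (ae_of_all _ fun x => by simp only [Pi.mul_apply]; field_simp))
    (hf'_int.congr (ae_of_all _ fun x => by simp only [Pi.mul_apply]; ring))
    (hf_int.congr (ae_of_all _ fun x => by simp only [Pi.mul_apply]; ring))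
  simp only [integral_gaussianReal_eq_integral_smul hv, smul_eq_mul]
  calc ∫ x, φ x * ((x - μ) * f x) = -v * ∫ x, f x * (-(x - μ) / v * φ x) := by
        rw [← integral_const_mul]; congr 1 with x; field_simp
    _ = v * ∫ x, φ x * f' x := by rw [hibp]; simp only [mul_comm (f' _)]; ring

theorem integrable_eval_gaussianReal (P : ℝ[X]) (μ : ℝ) (v : ℝ≥0) :
    Integrable (fun x => P.eval x) (gaussianReal μ v) := by
  induction P using Polynomial.induction_on' with
  | add P Q hP hQ =>
    simp only [eval_add]
    exact hP.add hQ
  | monomial n a =>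
    have hpow : Integrable (fun x : ℝ => x ^ n) (gaussianReal μ v) := by
      rw [← integrable_norm_iff (by fun_prop)]
      simpa using (memLp_id_gaussianReal (μ := μ) (v := v) n).integrable_norm_pow'
    simpa using hpow.const_mul a

theorem memLp_two_eval_gaussianReal (P : ℝ[X]) (μ : ℝ) (v : ℝ≥0) :
    MemLp (fun x => P.eval x) 2 (gaussianReal μ v) := by
  refine (memLp_two_iff_integrable_sq (by fun_prop)).2 ?_
  have h := integrable_eval_gaussianReal (P ^ 2) μ v
  simpa only [eval_pow] using h

noncomputable def gaussianExpectation : ℝ[X] →ₗ[ℝ] ℝ where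
  toFun P := ∫ x, P.eval x ∂gaussianReal 0 1
  map_add' P Q := by
    simp only [eval_add]
    exact integral_add (integrable_eval_gaussianReal P 0 1) (integrable_eval_gaussianReal Q 0 1)
  map_smul' c P := by simp [integral_const_mul]

theorem gaussianExpectation_apply (P : ℝ[X]) :
    gaussianExpectation P = ∫ x, P.eval x ∂gaussianReal 0 1 := rfl

@[simp]
theorem gaussianExpectation_one : gaussianExpectation 1 = 1 := by
  simp [gaussianExpectation_apply]

@[simp]
theorem gaussianExpectation_C (a : ℝ) : gaussianExpectation (C a) = a := by
  simp [gaussianExpectation_apply]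

@[simp]
theorem gaussianExpectation_C_mul (a : ℝ) (P : ℝ[X]) :
    gaussianExpectation (C a * P) = a * gaussianExpectation P := by
  rw [← smul_eq_C_mul, map_smul, smul_eq_mul]

theorem gaussianExpectation_X_mul (P : ℝ[X]) :
    gaussianExpectation (X * P) = gaussianExpectation (derivative P) := by
  have hXP := integrable_eval_gaussianReal (X * P) 0 1
  simp only [eval_mul, eval_X] at hXP
  simpa [gaussianExpectation_apply] using
    integral_sub_mul_eq_mul_integral_deriv_gaussianReal one_ne_zero (fun x => P.hasDerivAt x)
      (integrable_eval_gaussianReal P 0 1) (by simpa using hXP)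
      (integrable_eval_gaussianReal _ 0 1)

@[simp]
theorem gaussianExpectation_X : gaussianExpectation X = 0 := by
  simpa using gaussianExpectation_X_mul 1

noncomputable def hermiteReal (n : ℕ) : ℝ[X] := (hermite n).map (Int.castRingHom ℝ)

@[simp]
theorem hermiteReal_zero : hermiteReal 0 = 1 := by simp [hermiteReal]

theorem hermiteReal_succ (n : ℕ) :
    hermiteReal (n + 1) = X * hermiteReal n - derivative (hermiteReal n) := by
  simp only [hermiteReal, hermite_succ n, Polynomial.map_sub, Polynomial.map_mul, map_X,
    derivative_map]

theorem derivative_hermiteReal_succ (n : ℕ) :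
    derivative (hermiteReal (n + 1)) = ((n : ℝ) + 1) • hermiteReal n := by
  rw [hermiteReal, hermiteReal, derivative_map, derivative_hermite_succ, smul_eq_C_mul]
  simp

theorem He_eq_eval_hermiteReal (n : ℕ) (x : ℝ) : He n x = (hermiteReal n).eval x := by
  induction n using Nat.twoStepInduction with
  | zero => simp [He]
  | one => simp [He, hermiteReal_succ]
  | more n ih₀ ih₁ =>
    rw [hermiteReal_succ (n + 1), derivative_hermiteReal_succ]
    simp [He, ih₀, ih₁]

theorem gaussianExpectation_hermiteReal_succ_mul (n : ℕ) (P : ℝ[X]) :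
    gaussianExpectation (hermiteReal (n + 1) * P)
      = gaussianExpectation (hermiteReal n * derivative P) := by
  rw [hermiteReal_succ, sub_mul, mul_assoc, map_sub, gaussianExpectation_X_mul, derivative_mul,
    map_add, add_sub_cancel_left]

theorem gaussianExpectation_hermiteReal_mul_hermiteReal (p q : ℕ) :
    gaussianExpectation (hermiteReal p * hermiteReal q)
      = if p = q then (q.factorial : ℝ) else 0 := by
  induction p generalizing q with
  | zero =>
    cases q with
    | zero => simp
    | succ q =>
      rw [hermiteReal_zero, one_mul, ← mul_one (hermiteReal _),
        gaussianExpectation_hermiteReal_succ_mul]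
      simp
  | succ p ih =>
    rw [gaussianExpectation_hermiteReal_succ_mul]
    cases q with
    | zero => simp
    | succ q =>
      rw [derivative_hermiteReal_succ, mul_smul_comm, map_smul, ih, smul_eq_mul]
      split_ifs <;> simp_all [Nat.factorial_succ]

theorem gaussianExpectation_hermiteReal_succ_comp (n : ℕ) (a b : ℝ) :
    gaussianExpectation ((hermiteReal (n + 1)).comp (C a + C b * X))
      = a * gaussianExpectation ((hermiteReal n).comp (C a + C b * X))
        + (b ^ 2 - 1) * gaussianExpectation ((derivative (hermiteReal n)).comp (C a + C b * X)) := by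
  have hstein : gaussianExpectation (X * (hermiteReal n).comp (C a + C b * X))
      = b * gaussianExpectation ((derivative (hermiteReal n)).comp (C a + C b * X)) := by
    rw [gaussianExpectation_X_mul, derivative_comp]
    simp
  rw [hermiteReal_succ, sub_comp, mul_comp, X_comp, add_mul, mul_assoc, map_sub, map_add,
    gaussianExpectation_C_mul, gaussianExpectation_C_mul, hstein]
  ring

/-- Mehler's formula: `He_n` is an eigenfunction of the Ornstein–Uhlenbeck semigroup. -/
theorem gaussianExpectation_hermiteReal_comp {ρ β : ℝ} (hρβ : ρ ^ 2 + β ^ 2 = 1) (x : ℝ)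
    (n : ℕ) :
    gaussianExpectation ((hermiteReal n).comp (C (ρ * x) + C β * X))
      = ρ ^ n * (hermiteReal n).eval x := by
  induction n using Nat.twoStepInduction with
  | zero => simp
  | one => simp [hermiteReal_succ]
  | more n ih₀ ih₁ =>
    rw [gaussianExpectation_hermiteReal_succ_comp, ih₁, derivative_hermiteReal_succ, smul_comp,
      map_smul, ih₀, hermiteReal_succ (n + 1), derivative_hermiteReal_succ]
    simp only [eval_sub, eval_mul, eval_X, eval_smul, smul_eq_mul]
    linear_combination ((n + 1 : ℝ) * ρ ^ n * eval x (hermiteReal n)) * hρβ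

theorem hasLaw_mul_fst_add_mul_snd_gaussianReal {a b : ℝ} (hab : a ^ 2 + b ^ 2 = 1) :
    HasLaw (fun z : ℝ × ℝ => a * z.1 + b * z.2) (gaussianReal 0 1)
      ((gaussianReal 0 1).prod (gaussianReal 0 1)) := by
  have hindep : IndepFun (fun z : ℝ × ℝ => a * z.1) (fun z => b * z.2)
      ((gaussianReal 0 1).prod (gaussianReal 0 1)) :=
    indepFun_prod (X := (a * ·)) (Y := (b * ·)) (by fun_prop) (by fun_prop)
  have hfst := (gaussianReal_const_mul
    (measurePreserving_fst (μ := gaussianReal 0 1) (ν := gaussianReal 0 1)).hasLaw a).map_eq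
  have hsnd := (gaussianReal_const_mul
    (measurePreserving_snd (μ := gaussianReal 0 1) (ν := gaussianReal 0 1)).hasLaw b).map_eq
  refine ⟨by fun_prop, ?_⟩
  convert gaussianReal_add_gaussianReal_of_indepFun hindep hfst hsnd using 2
  · rfl
  · simp
  · exact NNReal.eq (by simp [hab])

theorem integral_He_mul_He_mul_add_mul_gaussianReal_prod {ρ β : ℝ} (hρβ : ρ ^ 2 + β ^ 2 = 1)
    (p q : ℕ) :
    ∫ z, He p z.1 * He q (ρ * z.1 + β * z.2) ∂(gaussianReal 0 1).prod (gaussianReal 0 1)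
      = if p = q then (q.factorial : ℝ) * ρ ^ q else 0 := by
  have hint : Integrable (fun z : ℝ × ℝ => He p z.1 * He q (ρ * z.1 + β * z.2))
      ((gaussianReal 0 1).prod (gaussianReal 0 1)) := by
    simp only [He_eq_eval_hermiteReal]
    exact ((memLp_two_eval_gaussianReal _ 0 1).comp_fst _).integrable_mul
      ((memLp_two_eval_gaussianReal _ 0 1).comp_measurePreserving
        ((hasLaw_mul_fst_add_mul_snd_gaussianReal hρβ).measurePreserving (by fun_prop)))
  have hinner (x : ℝ) : ∫ y, He q (ρ * x + β * y) ∂gaussianReal 0 1 = ρ ^ q * He q x := by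
    simp only [He_eq_eval_hermiteReal]
    rw [← gaussianExpectation_hermiteReal_comp hρβ x q, gaussianExpectation_apply]
    simp [eval_comp]
  calc ∫ z, He p z.1 * He q (ρ * z.1 + β * z.2) ∂(gaussianReal 0 1).prod (gaussianReal 0 1)
      = ∫ x, He p x * ∫ y, He q (ρ * x + β * y) ∂gaussianReal 0 1 ∂gaussianReal 0 1 := by
        simp only [integral_prod _ hint, integral_const_mul]
    _ = ρ ^ q * gaussianExpectation (hermiteReal p * hermiteReal q) := by
        rw [gaussianExpectation_apply, ← integral_const_mul]
        congr 1 with x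
        rw [hinner, eval_mul, He_eq_eval_hermiteReal, He_eq_eval_hermiteReal]
        ring
    _ = _ := by
        rw [gaussianExpectation_hermiteReal_mul_hermiteReal]
        split_ifs <;> ring

/-- If `Z₁, Z₂` are independent standard Gaussians, `ρ ∈ [-1,1]` and
`Y = ρ Z₁ + √(1-ρ²) Z₂`, then `E[He_p(Z₁)·He_q(Y)] = q!·ρ^q` if `p = q`
and `= 0` otherwise. -/
theorem stmt1
    {Ω : Type*} [MeasurableSpace Ω] (P : Measure Ω) [IsProbabilityMeasure P]
    (Z₁ Z₂ : Ω → ℝ) (hZ₁m : Measurable Z₁) (hZ₂m : Measurable Z₂)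
    (hZ₁ : P.map Z₁ = gaussianReal 0 1) (hZ₂ : P.map Z₂ = gaussianReal 0 1)
    (hindep : IndepFun Z₁ Z₂ P)
    (ρ : ℝ) (hρ : ρ ∈ Icc (-1 : ℝ) 1)
    (Y : Ω → ℝ) (hY : Y = fun ω => ρ * Z₁ ω + Real.sqrt (1 - ρ ^ 2) * Z₂ ω) :
    ∀ p q : ℕ, ∫ ω, He p (Z₁ ω) * He q (Y ω) ∂P
      = if p = q then (Nat.factorial q : ℝ) * ρ ^ q else 0 := by
  intro p q
  have hρβ : ρ ^ 2 + Real.sqrt (1 - ρ ^ 2) ^ 2 = 1 := by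
    rw [Real.sq_sqrt (by nlinarith [hρ.1, hρ.2])]
    ring
  have hlaw : HasLaw (fun ω => (Z₁ ω, Z₂ ω)) ((gaussianReal 0 1).prod (gaussianReal 0 1)) P :=
    hindep.hasLaw_prod ⟨hZ₁m.aemeasurable, hZ₁⟩ ⟨hZ₂m.aemeasurable, hZ₂⟩
  rw [hY, ← integral_He_mul_He_mul_add_mul_gaussianReal_prod hρβ p q]
  exact hlaw.integral_comp (f := fun z => He p z.1 * He q (ρ * z.1 + _ * z.2)) (by
    simp only [He_eq_eval_hermiteReal]
    fun_prop)
end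

section
/- Let α > 0 and κ > 0, let (V_q)_{q≥1} be real numbers with Σ_{q=1}^∞ V_q²/q! < ∞, and let R : ℝ → [−1,1] satisfy lim_{|x|→∞} |x|^α·R(x) = κ. Define S(x) := Σ_{q=1}^∞ (V_q²/q!)·R(x)^q. Then lim_{|x|→∞} |x|^α·S(x) = V_1²·κ. -/
open MeasureTheory Filter Set
open scoped Topology

/-! Factor `S = R · P(R)` with `P(r) = Σ_{q≥0} (V_{q+1}²/(q+1)!) r^q`. By the Weierstrass M-test `P` is
continuous on `[-1, 1]`, and `R → 0` because `|x|^α → ∞`; hence `P(R(x)) → P(0) = V_1²` and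
`|x|^α S(x) = (|x|^α R(x)) · P(R(x)) → κ V_1²`. -/

theorem continuousOn_tsum_mul_pow {c : ℕ → ℝ} (hc : Summable c) :
    ContinuousOn (fun r : ℝ => ∑' q, c q * r ^ q) (Icc (-1) 1) := by
  refine continuousOn_tsum (fun q => (continuous_const.mul (continuous_pow q)).continuousOn)
    hc.abs fun q r hr => ?_
  rw [norm_mul, norm_pow, Real.norm_eq_abs, Real.norm_eq_abs]
  exact mul_le_of_le_one_right (abs_nonneg _) (pow_le_one₀ (abs_nonneg _) (abs_le.2 hr))

theorem tsum_mul_zero_pow (c : ℕ → ℝ) : ∑' q, c q * (0 : ℝ) ^ q = c 0 := by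
  rw [tsum_eq_single 0 fun q hq => by simp [hq]]
  simp

theorem tendsto_tsum_mul_pow_comp {ι : Type*} {l : Filter ι} {c : ℕ → ℝ} (hc : Summable c)
    {g : ι → ℝ} (hg : Tendsto g l (𝓝 0)) (hg_mem : ∀ x, g x ∈ Icc (-1) 1) :
    Tendsto (fun x => ∑' q, c q * g x ^ q) l (𝓝 (c 0)) := by
  have hcont := (continuousOn_tsum_mul_pow hc 0 ⟨by norm_num, by norm_num⟩).tendsto
  rw [tsum_mul_zero_pow] at hcont
  exact hcont.comp (tendsto_nhdsWithin_iff.2 ⟨hg, .of_forall hg_mem⟩)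

theorem tendsto_zero_of_tendsto_mul_of_tendsto_atTop {ι : Type*} {l : Filter ι} {f g : ι → ℝ}
    {a : ℝ} (hf : Tendsto f l atTop) (hfg : Tendsto (fun x => f x * g x) l (𝓝 a)) :
    Tendsto g l (𝓝 0) := by
  refine (hfg.div_atTop hf).congr' ?_
  filter_upwards [hf.eventually_gt_atTop 0] with x hx
  field_simp

theorem stmt2_general (α κ : ℝ) (hα : 0 < α)
    (V : ℕ → ℝ)
    (hVsum : Summable (fun q : ℕ => V (q + 1) ^ 2 / (Nat.factorial (q + 1) : ℝ)))
    (R : ℝ → ℝ) (hR : ∀ x, R x ∈ Icc (-1 : ℝ) 1)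
    (hRlim : Tendsto (fun x => |x| ^ α * R x) (cocompact ℝ) (𝓝 κ))
    (S : ℝ → ℝ)
    (hS : ∀ x, S x = ∑' q : ℕ, V (q + 1) ^ 2 / (Nat.factorial (q + 1) : ℝ) * R x ^ (q + 1)) :
    Tendsto (fun x => |x| ^ α * S x) (cocompact ℝ) (𝓝 (V 1 ^ 2 * κ)) := by
  have hpow : Tendsto (fun x : ℝ => |x| ^ α) (cocompact ℝ) atTop :=
    (tendsto_rpow_atTop hα).comp (tendsto_norm_cocompact_atTop (E := ℝ))
  have hR0 := tendsto_zero_of_tendsto_mul_of_tendsto_atTop hpow hRlim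
  have hP := tendsto_tsum_mul_pow_comp hVsum hR0 hR
  have hS_factor : ∀ x, |x| ^ α * S x = (|x| ^ α * R x) *
      ∑' q : ℕ, V (q + 1) ^ 2 / (Nat.factorial (q + 1) : ℝ) * R x ^ q := fun x => by
    rw [hS, ← tsum_mul_left, ← tsum_mul_left]
    congr 1 with q
    ring
  simp only [hS_factor]
  simpa [mul_comm κ] using hRlim.mul hP

/-- Asymptotics of the covariance of a transformed long-range dependent field:
if `Σ_{q≥1} V_q²/q! < ∞`, `R` takes values in `[-1,1]` with
`|x|^α · R(x) → κ` as `|x| → ∞`, and `S(x) = Σ_{q≥1} (V_q²/q!)·R(x)^q`, then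
`|x|^α · S(x) → V_1² · κ` as `|x| → ∞`. -/
theorem stmt2 (α κ : ℝ) (hα : 0 < α) (hκ : 0 < κ)
    (V : ℕ → ℝ)
    (hVsum : Summable (fun q : ℕ => V (q + 1) ^ 2 / (Nat.factorial (q + 1) : ℝ)))
    (R : ℝ → ℝ) (hR : ∀ x, R x ∈ Icc (-1 : ℝ) 1)
    (hRlim : Tendsto (fun x => |x| ^ α * R x) (cocompact ℝ) (𝓝 κ))
    (S : ℝ → ℝ)
    (hS : ∀ x, S x = ∑' q : ℕ, V (q + 1) ^ 2 / (Nat.factorial (q + 1) : ℝ) * R x ^ (q + 1)) :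
    Tendsto (fun x => |x| ^ α * S x) (cocompact ℝ) (𝓝 (V 1 ^ 2 * κ)) :=
  stmt2_general α κ hα V hVsum R hR hRlim S hS
end

section
/- Let β, γ ∈ (0,1] with β + γ > 1, and let f be β-Hölder and g be γ-Hölder on a compact interval [a,b]. Then there exists a real number I (the Young integral ∫_a^b f dg) such that for every sequence of partitions a = t_0 < t_1 < ⋯ < t_n = b with mesh max_i (t_{i+1} − t_i) → 0, the left-endpoint Riemann sums Σ_{i=0}^{n−1} f(t_i)(g(t_{i+1}) − g(t_i)) converge to I. Moreover there is a constant C_{β,γ} depending only on β and γ such that |I − f(a)(g(b) − g(a))| ≤ C_{β,γ}·[f]_β·[g]_γ·(b−a)^{β+γ}. -/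
open MeasureTheory Filter Set
open scoped Topology

/-- `t 0 = a < t 1 < ⋯ < t n = b` is a partition of `[a,b]`. -/
def IsPartition (a b : ℝ) (t : ℕ → ℝ) (n : ℕ) : Prop :=
  t 0 = a ∧ t n = b ∧ ∀ i < n, t i < t (i + 1)

/-- Left-endpoint Riemann sum of `f` against `g` along the partition `t`. -/
noncomputable def riemannSum (f g : ℝ → ℝ) (t : ℕ → ℝ) (n : ℕ) : ℝ :=
  ∑ i ∈ Finset.range n, f (t i) * (g (t (i + 1)) - g (t i))

/-- `I` is the Young integral `∫_a^b f dg`: for every sequence of partitions of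
`[a,b]` with mesh tending to `0`, the left-endpoint Riemann sums tend to `I`. -/
def IsYoungIntegral (a b : ℝ) (f g : ℝ → ℝ) (I : ℝ) : Prop :=
  ∀ (t : ℕ → ℕ → ℝ) (n : ℕ → ℕ),
    (∀ k, IsPartition a b (t k) (n k)) →
    (∀ δ > (0 : ℝ), ∃ K : ℕ, ∀ k ≥ K, ∀ i < n k, t k (i + 1) - t k i ≤ δ) →
    Tendsto (fun k => riemannSum f g (t k) (n k)) atTop (𝓝 I)

/-!
Young's point-removal argument, i.e. the one-dimensional sewing lemma. Let `Ξ` be a germ whose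
coboundary `δΞ(s,u,v) = Ξ(s,v) - Ξ(s,u) - Ξ(u,v)` is bounded by `K (v - s)^θ` with `θ > 1`.
Among the `n` interior points of a partition of an interval of length `Δ`, delete the one whose
two neighbours are closest; they are at distance at most `2Δ/n`, and the Riemann sum changes by
one `δΞ` term, of size at most `K (2Δ/n)^θ`. Iterating down to the trivial partition gives
`|S - Ξ(t₀, tₙ)| ≤ 2^θ ζ(θ) K Δ^θ`. Applied blockwise to a common refinement, this shows that the
sums along two partitions of mesh at most `δ` differ by `O(δ^(θ-1) (b - a))`, so the sums
converge, and the trivial partition gives the bound on the limit. For the Young germ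
`Ξ(s,t) = f(s) (g(t) - g(s))` one has `δΞ(s,u,v) = (f(s) - f(u)) (g(v) - g(u))`, so `θ = β + γ`
and `K = [f]_β [g]_γ`.
-/

noncomputable def germSum (Ξ : ℝ → ℝ → ℝ) (t : ℕ → ℝ) (n : ℕ) : ℝ :=
  ∑ i ∈ Finset.range n, Ξ (t i) (t (i + 1))

def HasCoboundaryBound (Ξ : ℝ → ℝ → ℝ) (a b K θ : ℝ) : Prop :=
  ∀ s u v, a ≤ s → s ≤ u → u ≤ v → v ≤ b → |Ξ s v - Ξ s u - Ξ u v| ≤ K * (v - s) ^ θ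

def removePoint (t : ℕ → ℝ) (k : ℕ) (j : ℕ) : ℝ := t (if j < k then j else j + 1)

noncomputable def sewingConst (θ : ℝ) : ℝ := 2 ^ θ * ∑' k : ℕ, ((k : ℝ) + 1) ^ (-θ)

def Refines (w : ℕ → ℝ) (N : ℕ) (t : ℕ → ℝ) (n : ℕ) : Prop :=
  ∃ σ : ℕ → ℕ, Monotone σ ∧ σ 0 = 0 ∧ σ n = N ∧ ∀ i ≤ n, w (σ i) = t i

section Sewing

variable {Ξ : ℝ → ℝ → ℝ} {a b K θ : ℝ}

theorem germSum_add (Ξ : ℝ → ℝ → ℝ) (t : ℕ → ℝ) (p q : ℕ) :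
    germSum Ξ t (p + q) = germSum Ξ t p + germSum Ξ (fun j => t (p + j)) q := by
  simp only [germSum, Finset.sum_range_add, add_assoc]

theorem germSum_removePoint (Ξ : ℝ → ℝ → ℝ) (t : ℕ → ℝ) {m n : ℕ} (hmn : m ≤ n) :
    germSum Ξ t (n + 2) = germSum Ξ (removePoint t (m + 1)) (n + 1) -
      (Ξ (t m) (t (m + 2)) - Ξ (t m) (t (m + 1)) - Ξ (t (m + 1)) (t (m + 2))) := by
  obtain ⟨r, rfl⟩ := Nat.exists_eq_add_of_le hmn
  have htail : (fun j => removePoint t (m + 1) (m + 1 + j)) = fun j => t (m + 2 + j) := by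
    funext j
    simp only [removePoint, if_neg (by omega : ¬ m + 1 + j < m + 1)]
    ring_nf
  have hhead : germSum Ξ (removePoint t (m + 1)) m = germSum Ξ t m :=
    Finset.sum_congr rfl fun i hi => by
      simp only [Finset.mem_range] at hi
      simp only [removePoint, if_pos (by omega : i < m + 1), if_pos (by omega : i + 1 < m + 1)]
  rw [show m + r + 2 = m + 2 + r by ring, show m + r + 1 = m + 1 + r by ring, germSum_add,
    germSum_add _ (removePoint t (m + 1)), htail]
  simp only [germSum, Finset.sum_range_succ] at hhead ⊢
  simp only [removePoint, lt_irrefl, if_false, lt_add_iff_pos_right, zero_lt_one, if_true]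
    at hhead ⊢
  rw [hhead]
  ring

theorem Monotone.removePoint {t : ℕ → ℝ} (ht : Monotone t) (k : ℕ) :
    Monotone (removePoint t k) :=
  ht.comp (f := fun j => if j < k then j else j + 1) <|
    monotone_nat_of_le_succ fun j => by split_ifs <;> omega

theorem exists_double_gap_le {t : ℕ → ℝ} (ht : Monotone t) (n : ℕ) :
    ∃ m ≤ n, (n + 1 : ℝ) * (t (m + 2) - t m) ≤ 2 * (t (n + 2) - t 0) := by
  have htel : ∑ m ∈ Finset.range (n + 1), (t (m + 2) - t m) =
      (t (n + 2) - t 1) + (t (n + 1) - t 0) := by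
    rw [← Finset.sum_range_sub (fun i => t (i + 1)), ← Finset.sum_range_sub t,
      ← Finset.sum_add_distrib]
    exact Finset.sum_congr rfl fun m _ => by ring
  have hsum : ∑ m ∈ Finset.range (n + 1), (n + 1 : ℝ) * (t (m + 2) - t m) ≤
      ∑ m ∈ Finset.range (n + 1), 2 * (t (n + 2) - t 0) := by
    rw [← Finset.mul_sum, htel, Finset.sum_const, Finset.card_range, nsmul_eq_mul]
    push_cast
    have h01 : t 0 ≤ t 1 := ht (Nat.zero_le 1)
    have hlast : t (n + 1) ≤ t (n + 2) := ht (Nat.le_succ (n + 1))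
    gcongr
    linarith
  obtain ⟨m, hm, hle⟩ := Finset.exists_le_of_sum_le Finset.nonempty_range_add_one hsum
  exact ⟨m, Nat.lt_succ_iff.1 (Finset.mem_range.1 hm), hle⟩

theorem abs_germSum_sub_le_mul_sum (hΞ : HasCoboundaryBound Ξ a b K θ) (hK : 0 ≤ K)
    (hθ : 0 ≤ θ) (n : ℕ) {t : ℕ → ℝ} (ht : Monotone t) (ha : a ≤ t 0) (hb : t (n + 1) ≤ b) :
    |germSum Ξ t (n + 1) - Ξ (t 0) (t (n + 1))| ≤
      K * (2 * (t (n + 1) - t 0)) ^ θ * ∑ m ∈ Finset.range n, ((m : ℝ) + 1) ^ (-θ) := by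
  induction n generalizing t with
  | zero => simp [germSum]
  | succ n ih =>
    obtain ⟨m, hmn, hgap⟩ := exists_double_gap_le ht n
    set Δ := t (n + 2) - t 0
    have hΔ : 0 ≤ Δ := sub_nonneg.2 (ht (Nat.zero_le _))
    have hd : 0 ≤ t (m + 2) - t m := sub_nonneg.2 (ht (by omega))
    have hfirst : removePoint t (m + 1) 0 = t 0 := by simp [removePoint]
    have hlast : removePoint t (m + 1) (n + 1) = t (n + 2) := by
      simp [removePoint, show ¬ n + 1 < m + 1 by omega]
    have hremoved := ih (ht.removePoint (m + 1)) (hfirst ▸ ha) (hlast ▸ hb)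
    rw [hfirst, hlast] at hremoved
    have hdefect : |Ξ (t m) (t (m + 2)) - Ξ (t m) (t (m + 1)) - Ξ (t (m + 1)) (t (m + 2))| ≤
        K * (2 * Δ) ^ θ * ((n : ℝ) + 1) ^ (-θ) := calc
      _ ≤ K * (t (m + 2) - t m) ^ θ :=
        hΞ _ _ _ (ha.trans (ht (Nat.zero_le m))) (ht (by omega)) (ht (by omega))
          ((ht (by omega)).trans hb)
      _ ≤ K * (2 * Δ / (n + 1)) ^ θ := by
        gcongr
        rw [le_div_iff₀ (by positivity)]
        linarith
      _ = K * (2 * Δ) ^ θ * ((n : ℝ) + 1) ^ (-θ) := by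
        rw [Real.div_rpow (by positivity) (by positivity), Real.rpow_neg (by positivity)]
        ring
    rw [germSum_removePoint Ξ t hmn, Finset.sum_range_succ, mul_add]
    calc _ = |(germSum Ξ (removePoint t (m + 1)) (n + 1) - Ξ (t 0) (t (n + 2))) -
          (Ξ (t m) (t (m + 2)) - Ξ (t m) (t (m + 1)) - Ξ (t (m + 1)) (t (m + 2)))| := by
          congr 1; ring
      _ ≤ _ := (abs_sub _ _).trans (add_le_add hremoved hdefect)

theorem summable_add_one_rpow_neg (hθ : 1 < θ) :
    Summable fun k : ℕ => ((k : ℝ) + 1) ^ (-θ) := by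
  have h := (summable_nat_add_iff 1).2 (Real.summable_nat_rpow.2 (neg_lt_neg hθ))
  simpa using h

theorem sewingConst_pos (hθ : 1 < θ) : 0 < sewingConst θ :=
  mul_pos (by positivity) <|
    (summable_add_one_rpow_neg hθ).tsum_pos (fun _ => by positivity) 0 (by simp)

theorem abs_germSum_sub_le (hΞ : HasCoboundaryBound Ξ a b K θ) (hK : 0 ≤ K) (hθ : 1 < θ)
    {t : ℕ → ℝ} (ht : Monotone t) (n : ℕ) (ha : a ≤ t 0) (hb : t n ≤ b) :
    |germSum Ξ t n - Ξ (t 0) (t n)| ≤ sewingConst θ * K * (t n - t 0) ^ θ := by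
  obtain _ | n := n
  · have h := hΞ (t 0) (t 0) (t 0) ha le_rfl le_rfl hb
    simp only [sub_self, Real.zero_rpow (by positivity : θ ≠ 0), mul_zero] at h ⊢
    simpa [germSum] using h
  have hΔ : 0 ≤ t (n + 1) - t 0 := sub_nonneg.2 (ht (Nat.zero_le _))
  have hpartial : ∑ m ∈ Finset.range n, ((m : ℝ) + 1) ^ (-θ) ≤ ∑' k : ℕ, ((k : ℝ) + 1) ^ (-θ) :=
    (summable_add_one_rpow_neg hθ).sum_le_tsum _ fun _ _ => by positivity
  calc _ ≤ K * (2 * (t (n + 1) - t 0)) ^ θ * ∑ m ∈ Finset.range n, ((m : ℝ) + 1) ^ (-θ) :=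
        abs_germSum_sub_le_mul_sum hΞ hK (by positivity) n ht ha hb
    _ ≤ K * (2 * (t (n + 1) - t 0)) ^ θ * ∑' k : ℕ, ((k : ℝ) + 1) ^ (-θ) := by gcongr
    _ = sewingConst θ * K * (t (n + 1) - t 0) ^ θ := by
        rw [sewingConst, Real.mul_rpow zero_le_two hΔ]
        ring

theorem germSum_eq_sum_blocks (Ξ : ℝ → ℝ → ℝ) (w : ℕ → ℝ) {σ : ℕ → ℕ} (hσ : Monotone σ)
    (hσ0 : σ 0 = 0) (n : ℕ) :
    germSum Ξ w (σ n) =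
      ∑ i ∈ Finset.range n, germSum Ξ (fun j => w (σ i + j)) (σ (i + 1) - σ i) := by
  induction n with
  | zero => simp [hσ0, germSum]
  | succ n ih =>
    rw [Finset.sum_range_succ, ← ih, ← germSum_add, Nat.add_sub_cancel' (hσ n.le_succ)]

theorem abs_germSum_sub_germSum_le_of_refines (hΞ : HasCoboundaryBound Ξ a b K θ) (hK : 0 ≤ K)
    (hθ : 1 < θ) {w t : ℕ → ℝ} {N n : ℕ} (hw : Monotone w) (ha : a ≤ w 0) (hb : w N ≤ b)
    (hwt : Refines w N t n) :
    |germSum Ξ w N - germSum Ξ t n| ≤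
      sewingConst θ * K * ∑ i ∈ Finset.range n, (t (i + 1) - t i) ^ θ := by
  obtain ⟨σ, hσ, hσ0, rfl, hσt⟩ := hwt
  have hblock : ∀ i < n, |germSum Ξ (fun j => w (σ i + j)) (σ (i + 1) - σ i) -
      Ξ (t i) (t (i + 1))| ≤ sewingConst θ * K * (t (i + 1) - t i) ^ θ := by
    intro i hi
    have hlen : σ i + (σ (i + 1) - σ i) = σ (i + 1) := Nat.add_sub_cancel' (hσ i.le_succ)
    have h := abs_germSum_sub_le (t := fun j => w (σ i + j)) hΞ hK hθ
      (hw.comp fun _ _ h => Nat.add_le_add_left h _) (σ (i + 1) - σ i)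
      (ha.trans (hw (Nat.zero_le _))) (by simpa only [hlen] using (hw (hσ hi)).trans hb)
    simpa only [Nat.add_zero, hlen, hσt i hi.le, hσt (i + 1) hi] using h
  rw [germSum_eq_sum_blocks Ξ w hσ hσ0, germSum, ← Finset.sum_sub_distrib, Finset.mul_sum]
  exact (Finset.abs_sum_le_sum_abs _ _).trans
    (Finset.sum_le_sum fun i hi => hblock i (Finset.mem_range.1 hi))

end Sewing

theorem IsPartition.strictMonoOn {a b : ℝ} {t : ℕ → ℝ} {n : ℕ} (ht : IsPartition a b t n) :
    StrictMonoOn t (Iic n) :=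
  strictMonoOn_Iic_of_lt_succ fun m hm => by simpa using ht.2.2 m hm

theorem IsPartition.mem_Icc {a b : ℝ} {t : ℕ → ℝ} {n : ℕ} (ht : IsPartition a b t n) {i : ℕ}
    (hi : i ≤ n) : t i ∈ Icc a b := by
  have hmono := ht.strictMonoOn.monotoneOn
  exact ⟨ht.1 ▸ hmono (Set.mem_Iic.2 (Nat.zero_le n)) (Set.mem_Iic.2 hi) (Nat.zero_le i),
    ht.2.1 ▸ hmono (Set.mem_Iic.2 hi) (Set.mem_Iic.2 le_rfl) hi⟩

theorem Finset.exists_monotone_enum {α : Type*} [LinearOrder α] (F : Finset α)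
    (hF : F.Nonempty) :
    ∃ w : ℕ → α, Monotone w ∧ StrictMonoOn w (Set.Iic (F.card - 1)) ∧ w 0 = F.min' hF ∧
      w (F.card - 1) = F.max' hF ∧ ∀ x ∈ F, ∃ j ≤ F.card - 1, w j = x := by
  have hk : 0 < F.card := F.card_pos.2 hF
  set e := F.orderEmbOfFin rfl
  refine ⟨fun j => e ⟨min j (F.card - 1), by omega⟩, fun i j hij => ?_, fun i hi j hj hij => ?_,
    ?_, ?_, fun x hx => ?_⟩
  · exact e.monotone (Fin.mk_le_mk.2 (min_le_min_right _ hij))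
  · refine e.strictMono (Fin.mk_lt_mk.2 ?_)
    rw [min_eq_left (Set.mem_Iic.1 hi), min_eq_left (Set.mem_Iic.1 hj)]
    exact hij
  · simpa using Finset.orderEmbOfFin_zero rfl hk
  · simpa using Finset.orderEmbOfFin_last rfl hk
  · obtain ⟨i, rfl⟩ : x ∈ Set.range e := by rwa [Finset.range_orderEmbOfFin]
    exact ⟨i, by omega, by simp [min_eq_left (show (i : ℕ) ≤ F.card - 1 by omega)]⟩

theorem refines_of_forall_exists {w t : ℕ → ℝ} {N n : ℕ} (hw : StrictMonoOn w (Iic N))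
    (ht : MonotoneOn t (Iic n)) (h0 : w 0 = t 0) (hN : w N = t n)
    (hpts : ∀ i ≤ n, ∃ j ≤ N, w j = t i) : Refines w N t n := by
  choose σ hσN hσt using fun i => hpts (min i n) (min_le_right _ _)
  have hmem : ∀ i, σ i ∈ Iic N := hσN
  refine ⟨σ, fun i i' hii' => ?_, hw.injOn (hmem 0) (Nat.zero_le N) ?_,
    hw.injOn (hmem n) (le_refl N) ?_, fun i hi => ?_⟩
  · refine (hw.le_iff_le (hmem i) (hmem i')).1 ?_
    rw [hσt, hσt]
    exact ht (Set.mem_Iic.2 (min_le_right _ _)) (Set.mem_Iic.2 (min_le_right _ _))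
      (min_le_min_right _ hii')
  · simp [hσt, h0]
  · simp [hσt, hN]
  · rw [hσt, min_eq_left hi]

theorem exists_common_refinement {a b : ℝ} {t u : ℕ → ℝ} {n M : ℕ} (ht : IsPartition a b t n)
    (hu : IsPartition a b u M) :
    ∃ (w : ℕ → ℝ) (N : ℕ), Monotone w ∧ w 0 = a ∧ w N = b ∧ Refines w N t n ∧ Refines w N u M := by
  set F := (Finset.range (n + 1)).image t ∪ (Finset.range (M + 1)).image u
  have htF : ∀ i ≤ n, t i ∈ F := fun i hi =>
    Finset.mem_union_left _ (Finset.mem_image_of_mem t (Finset.mem_range.2 (by omega)))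
  have huF : ∀ i ≤ M, u i ∈ F := fun i hi =>
    Finset.mem_union_right _ (Finset.mem_image_of_mem u (Finset.mem_range.2 (by omega)))
  have hFab : ∀ x ∈ F, x ∈ Icc a b := by
    simp only [F, Finset.mem_union, Finset.mem_image, Finset.mem_range]
    rintro x (⟨i, hi, rfl⟩ | ⟨i, hi, rfl⟩)
    exacts [ht.mem_Icc (by omega), hu.mem_Icc (by omega)]
  have haF : a ∈ F := ht.1 ▸ htF 0 (Nat.zero_le n)
  have hbF : b ∈ F := ht.2.1 ▸ htF n (le_refl n)
  have hF : F.Nonempty := ⟨a, haF⟩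
  obtain ⟨w, hw, hwstrict, hw0, hwN, hwF⟩ := F.exists_monotone_enum hF
  rw [(F.min'_eq_iff hF a).2 ⟨haF, fun x hx => (hFab x hx).1⟩] at hw0
  rw [(F.max'_eq_iff hF b).2 ⟨hbF, fun x hx => (hFab x hx).2⟩] at hwN
  refine ⟨w, F.card - 1, hw, hw0, hwN, ?_, ?_⟩
  · exact refines_of_forall_exists hwstrict ht.strictMonoOn.monotoneOn (hw0.trans ht.1.symm)
      (hwN.trans ht.2.1.symm) fun i hi => hwF _ (htF i hi)
  · exact refines_of_forall_exists hwstrict hu.strictMonoOn.monotoneOn (hw0.trans hu.1.symm)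
      (hwN.trans hu.2.1.symm) fun i hi => hwF _ (huF i hi)

theorem sum_rpow_sub_le {t : ℕ → ℝ} {n : ℕ} {δ θ : ℝ} (hθ : 1 ≤ θ)
    (hmono : ∀ i < n, t i ≤ t (i + 1)) (hmesh : ∀ i < n, t (i + 1) - t i ≤ δ) :
    ∑ i ∈ Finset.range n, (t (i + 1) - t i) ^ θ ≤ δ ^ (θ - 1) * (t n - t 0) := by
  rw [← Finset.sum_range_sub, Finset.mul_sum]
  refine Finset.sum_le_sum fun i hi => ?_
  have hi := Finset.mem_range.1 hi
  have hgap : 0 ≤ t (i + 1) - t i := sub_nonneg.2 (hmono i hi)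
  calc (t (i + 1) - t i) ^ θ = (t (i + 1) - t i) ^ (θ - 1) * (t (i + 1) - t i) := by
        conv_lhs => rw [← sub_add_cancel θ 1]
        rw [Real.rpow_add' hgap (by linarith), Real.rpow_one]
    _ ≤ δ ^ (θ - 1) * (t (i + 1) - t i) := by
        gcongr
        exact hmesh i hi

theorem isPartition_uniform {a b : ℝ} (hab : a < b) (k : ℕ) :
    IsPartition a b (fun i => a + i * ((b - a) / (k + 1))) (k + 1) := by
  have hstep : 0 < (b - a) / (k + 1) := div_pos (sub_pos.2 hab) (by positivity)
  refine ⟨by simp, ?_, fun i _ => ?_⟩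
  · push_cast
    field_simp
    ring
  · push_cast
    linarith

theorem cauchySeq_of_dist_le_add {X : Type*} [PseudoMetricSpace X] {x : ℕ → X} {e : ℕ → ℝ}
    (h : ∀ k l, dist (x k) (x l) ≤ e k + e l) (he : Tendsto e atTop (𝓝 0)) : CauchySeq x := by
  refine Metric.cauchySeq_iff.2 fun ε hε => ?_
  obtain ⟨N, hN⟩ := eventually_atTop.1 (he.eventually (gt_mem_nhds (half_pos hε)))
  exact ⟨N, fun k hk l hl => (h k l).trans_lt (by linarith [hN k hk, hN l hl])⟩

section Limit

variable {Ξ : ℝ → ℝ → ℝ} {a b K θ : ℝ}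

theorem abs_germSum_sub_germSum_le (hΞ : HasCoboundaryBound Ξ a b K θ) (hK : 0 ≤ K) (hθ : 1 < θ)
    {t u : ℕ → ℝ} {n M : ℕ} {δt δu : ℝ} (ht : IsPartition a b t n) (hu : IsPartition a b u M)
    (hδt : ∀ i < n, t (i + 1) - t i ≤ δt) (hδu : ∀ i < M, u (i + 1) - u i ≤ δu) :
    |germSum Ξ t n - germSum Ξ u M| ≤
      sewingConst θ * K * (b - a) * (δt ^ (θ - 1) + δu ^ (θ - 1)) := by
  obtain ⟨w, N, hw, hw0, hwN, hwt, hwu⟩ := exists_common_refinement ht hu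
  have hsum : ∀ {s : ℕ → ℝ} {m : ℕ} {δ : ℝ}, IsPartition a b s m →
      (∀ i < m, s (i + 1) - s i ≤ δ) →
      ∑ i ∈ Finset.range m, (s (i + 1) - s i) ^ θ ≤ δ ^ (θ - 1) * (b - a) := fun hs hδ => by
    simpa only [hs.1, hs.2.1] using sum_rpow_sub_le hθ.le (fun i hi => (hs.2.2 i hi).le) hδ
  calc |germSum Ξ t n - germSum Ξ u M|
      = |(germSum Ξ w N - germSum Ξ u M) - (germSum Ξ w N - germSum Ξ t n)| := by
        congr 1; ring
    _ ≤ |germSum Ξ w N - germSum Ξ u M| + |germSum Ξ w N - germSum Ξ t n| := abs_sub _ _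
    _ ≤ sewingConst θ * K * ∑ i ∈ Finset.range M, (u (i + 1) - u i) ^ θ +
          sewingConst θ * K * ∑ i ∈ Finset.range n, (t (i + 1) - t i) ^ θ :=
        add_le_add
          (abs_germSum_sub_germSum_le_of_refines hΞ hK hθ hw hw0.ge hwN.le hwu)
          (abs_germSum_sub_germSum_le_of_refines hΞ hK hθ hw hw0.ge hwN.le hwt)
    _ ≤ sewingConst θ * K * (δu ^ (θ - 1) * (b - a)) +
          sewingConst θ * K * (δt ^ (θ - 1) * (b - a)) := by
        have hC : 0 ≤ sewingConst θ * K := mul_nonneg (sewingConst_pos hθ).le hK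
        gcongr
        exacts [hsum hu hδu, hsum ht hδt]
    _ = sewingConst θ * K * (b - a) * (δt ^ (θ - 1) + δu ^ (θ - 1)) := by ring

theorem exists_germSum_limit (hΞ : HasCoboundaryBound Ξ a b K θ) (hK : 0 ≤ K) (hθ : 1 < θ)
    (hab : a < b) :
    ∃ I, ∀ (t : ℕ → ℝ) (n : ℕ) (δ : ℝ), IsPartition a b t n →
      (∀ i < n, t (i + 1) - t i ≤ δ) →
      |germSum Ξ t n - I| ≤ sewingConst θ * K * (b - a) * δ ^ (θ - 1) := by
  set C := sewingConst θ * K * (b - a)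
  set h : ℕ → ℝ := fun k => (b - a) / (k + 1)
  set p : ℕ → ℕ → ℝ := fun k i => a + i * h k
  have hp : ∀ k, IsPartition a b (p k) (k + 1) := isPartition_uniform hab
  have hpmesh : ∀ k, ∀ i < k + 1, p k (i + 1) - p k i ≤ h k := fun k i _ =>
    le_of_eq (by simp only [p]; push_cast; ring)
  have hbound : ∀ t n δ k, IsPartition a b t n → (∀ i < n, t (i + 1) - t i ≤ δ) →
      |germSum Ξ t n - germSum Ξ (p k) (k + 1)| ≤ C * (δ ^ (θ - 1) + h k ^ (θ - 1)) :=
    fun t n δ k ht hδ => abs_germSum_sub_germSum_le hΞ hK hθ ht (hp k) hδ (hpmesh k)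
  have hh : Tendsto (fun k => h k ^ (θ - 1)) atTop (𝓝 0) := by
    have hrpow := (Real.continuousAt_rpow_const 0 (θ - 1) (Or.inr (by linarith))).tendsto
    rw [Real.zero_rpow (by linarith)] at hrpow
    refine hrpow.comp ?_
    simpa [h, div_eq_mul_inv] using tendsto_one_div_add_atTop_nhds_zero_nat.const_mul (b - a)
  have hcauchy : CauchySeq fun k => germSum Ξ (p k) (k + 1) := by
    refine cauchySeq_of_dist_le_add (e := fun k => C * h k ^ (θ - 1)) (fun k l => ?_)
      (by simpa using hh.const_mul C)
    rw [Real.dist_eq]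
    linarith [hbound (p k) (k + 1) (h k) l (hp k) (hpmesh k)]
  obtain ⟨I, hI⟩ := cauchySeq_tendsto_of_complete hcauchy
  refine ⟨I, fun t n δ ht hδ => le_of_tendsto_of_tendsto' ((hI.const_sub _).abs) ?_
    fun k => hbound t n δ k ht hδ⟩
  simpa using (hh.const_add (δ ^ (θ - 1))).const_mul C

end Limit

theorem isYoungIntegral_of_abs_sub_le {a b I c p : ℝ} {f g : ℝ → ℝ} (hp : 0 < p)
    (hI : ∀ (t : ℕ → ℝ) (n : ℕ) (δ : ℝ), IsPartition a b t n →
      (∀ i < n, t (i + 1) - t i ≤ δ) → |riemannSum f g t n - I| ≤ c * δ ^ p) :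
    IsYoungIntegral a b f g I := by
  intro t n ht hmesh
  refine Metric.tendsto_atTop.2 fun ε hε => ?_
  have hc : Tendsto (fun δ : ℝ => c * δ ^ p) (𝓝[>] 0) (𝓝 0) := by
    have := (Real.continuousAt_rpow_const 0 p (Or.inr hp.le)).tendsto.const_mul c
    simpa [Real.zero_rpow hp.ne'] using this.mono_left nhdsWithin_le_nhds
  obtain ⟨δ, hδε, hδ⟩ := ((hc.eventually (gt_mem_nhds hε)).and self_mem_nhdsWithin).exists
  obtain ⟨K, hK⟩ := hmesh δ hδ
  exact ⟨K, fun k hk => (hI _ _ δ (ht k) (hK k hk)).trans_lt hδε⟩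

theorem hasCoboundaryBound_young {a b β γ Kf Kg : ℝ} {f g : ℝ → ℝ} (hβ : 0 ≤ β) (hγ : 0 ≤ γ)
    (hKf : 0 ≤ Kf) (hKg : 0 ≤ Kg)
    (hf : ∀ x ∈ Icc a b, ∀ y ∈ Icc a b, |f x - f y| ≤ Kf * |x - y| ^ β)
    (hg : ∀ x ∈ Icc a b, ∀ y ∈ Icc a b, |g x - g y| ≤ Kg * |x - y| ^ γ) :
    HasCoboundaryBound (fun s u => f s * (g u - g s)) a b (Kf * Kg) (β + γ) := by
  intro s u v has hsu huv hvb
  have hs : s ∈ Icc a b := ⟨has, by linarith⟩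
  have hu : u ∈ Icc a b := ⟨by linarith, by linarith⟩
  have hv : v ∈ Icc a b := ⟨by linarith, hvb⟩
  have hvs : 0 ≤ v - s := by linarith
  calc |f s * (g v - g s) - f s * (g u - g s) - f u * (g v - g u)|
      = |f s - f u| * |g v - g u| := by rw [← abs_mul]; ring_nf
    _ ≤ (Kf * |s - u| ^ β) * (Kg * |v - u| ^ γ) :=
        mul_le_mul (hf s hs u hu) (hg v hv u hu) (abs_nonneg _) (by positivity)
    _ ≤ (Kf * (v - s) ^ β) * (Kg * (v - s) ^ γ) := by
        gcongr <;> exact abs_le.2 ⟨by linarith, by linarith⟩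
    _ = Kf * Kg * (v - s) ^ (β + γ) := by
        rw [Real.rpow_add_of_nonneg hvs hβ hγ]
        ring

/-- Young's theorem: for `β + γ > 1`, a `β`-Hölder `f` and a `γ`-Hölder `g` on
`[a,b]`, the Young integral `∫_a^b f dg` exists (as a limit of left-endpoint
Riemann sums along any sequence of partitions with vanishing mesh) and
satisfies `|∫_a^b f dg − f(a)(g(b) − g(a))| ≤ C_{β,γ}·[f]_β·[g]_γ·(b−a)^{β+γ}`
with a constant depending only on `β` and `γ`. -/
theorem stmt3 (β γ : ℝ) (hβ : β ∈ Ioc (0 : ℝ) 1) (hγ : γ ∈ Ioc (0 : ℝ) 1)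
    (hβγ : 1 < β + γ) :
    ∃ C : ℝ, 0 < C ∧
      ∀ (a b : ℝ), a < b →
        ∀ (f g : ℝ → ℝ) (Kf Kg : ℝ), 0 ≤ Kf → 0 ≤ Kg →
          (∀ x ∈ Icc a b, ∀ y ∈ Icc a b, |f x - f y| ≤ Kf * |x - y| ^ β) →
          (∀ x ∈ Icc a b, ∀ y ∈ Icc a b, |g x - g y| ≤ Kg * |x - y| ^ γ) →
          ∃ I : ℝ, IsYoungIntegral a b f g I ∧
            |I - f a * (g b - g a)| ≤ C * Kf * Kg * (b - a) ^ (β + γ) := by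
  refine ⟨sewingConst (β + γ), sewingConst_pos hβγ, fun a b hab f g Kf Kg hKf hKg hf hg => ?_⟩
  obtain ⟨I, hI⟩ := exists_germSum_limit (hasCoboundaryBound_young hβ.1.le hγ.1.le hKf hKg hf hg)
    (mul_nonneg hKf hKg) hβγ hab
  refine ⟨I, isYoungIntegral_of_abs_sub_le (by linarith) hI, ?_⟩
  have hsingle := hI (fun i => if i = 0 then a else b) 1 (b - a) ⟨rfl, rfl, by simpa using hab⟩
    (by simp)
  have hba : 0 < b - a := sub_pos.2 hab
  rw [abs_sub_comm]
  calc _ ≤ sewingConst (β + γ) * (Kf * Kg) * (b - a) * (b - a) ^ (β + γ - 1) := by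
        simpa [germSum] using hsingle
    _ = sewingConst (β + γ) * Kf * Kg * (b - a) ^ (β + γ) := by
        rw [Real.rpow_sub_one hba.ne']
        field_simp
end

section
/- Let β, γ ∈ (0,1] with β + γ > 1. Suppose f_n, f are β-Hölder and g_n, g are γ-Hölder on [a,b], with ‖f_n − f‖_{C^β} → 0 and ‖g_n − g‖_{C^γ} → 0 as n → ∞. Then the Young integrals satisfy ∫_a^b f_n dg_n → ∫_a^b f dg. -/
open MeasureTheory Filter Set
open scoped Topology

/-- The `β`-Hölder norm `‖f‖_{C^β} = sup |f| + [f]_β` of `f` on `[a,b]`. -/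
noncomputable def holderNorm (a b β : ℝ) (f : ℝ → ℝ) : ℝ :=
  sSup ((fun x => |f x|) '' Icc a b) +
    sSup {r : ℝ | ∃ x ∈ Icc a b, ∃ y ∈ Icc a b, x ≠ y ∧ r = |f x - f y| / |x - y| ^ β}

/-!
Young's sewing argument along dyadic partitions. Refining the dyadic partition of level `k` to
level `k + 1` changes the Riemann sum of `h` against `G` by `2 ^ k` products
`(h t₁ - h t₀) * (G t₂ - G t₁)` over adjacent intervals of length `(b - a) / 2 ^ (k + 1)`, each
at most `[h]_β [G]_γ ((b - a) / 2 ^ (k + 1)) ^ (β + γ)`. As `β + γ > 1` these corrections form a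
convergent geometric series, so every dyadic Riemann sum lies within
`[h]_β [G]_γ (b - a) ^ (β + γ) / (2 ^ (β + γ) - 2)` of `h a * (G b - G a)`, which gives
`|∫ h dG| ≤ C ‖h‖_{C^β} ‖G‖_{C^γ}`. Splitting `∫ f_n dg_n - ∫ f dg` bilinearly into the integrals
of `f_n - f` against `g_n - g` and `g`, and of `f` against `g_n - g`, bounds it by products of
Hölder norms that tend to `0`.
-/

def HolderBoundOn (s : Set ℝ) (β K : ℝ) (h : ℝ → ℝ) : Prop :=
  ∀ x ∈ s, ∀ y ∈ s, |h x - h y| ≤ K * |x - y| ^ β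

-- The two summands of `holderNorm`. An unbounded `sSup` is `0` in `ℝ`, so they are only
-- meaningful for Hölder `h`, where `HolderBoundOn.holderSeminormOn` and
-- `HolderBoundOn.abs_le_supNormOn` apply.
noncomputable def supNormOn (s : Set ℝ) (h : ℝ → ℝ) : ℝ :=
  sSup ((fun x => |h x|) '' s)

noncomputable def holderSeminormOn (s : Set ℝ) (β : ℝ) (h : ℝ → ℝ) : ℝ :=
  sSup {r : ℝ | ∃ x ∈ s, ∃ y ∈ s, x ≠ y ∧ r = |h x - h y| / |x - y| ^ β}

theorem holderNorm_eq (a b β : ℝ) (h : ℝ → ℝ) :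
    holderNorm a b β h = supNormOn (Icc a b) h + holderSeminormOn (Icc a b) β h :=
  rfl

theorem supNormOn_nonneg (s : Set ℝ) (h : ℝ → ℝ) : 0 ≤ supNormOn s h :=
  Real.sSup_nonneg (by rintro _ ⟨x, -, rfl⟩; exact abs_nonneg _)

theorem holderSeminormOn_nonneg (s : Set ℝ) (β : ℝ) (h : ℝ → ℝ) :
    0 ≤ holderSeminormOn s β h :=
  Real.sSup_nonneg (by rintro _ ⟨x, -, y, -, -, rfl⟩; positivity)

theorem holderSeminormOn_le_holderNorm (a b β : ℝ) (h : ℝ → ℝ) :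
    holderSeminormOn (Icc a b) β h ≤ holderNorm a b β h :=
  le_add_of_nonneg_left (supNormOn_nonneg _ _)

namespace HolderBoundOn

variable {s : Set ℝ} {β K : ℝ} {h : ℝ → ℝ}

theorem sub {K' : ℝ} {h' : ℝ → ℝ} (hh : HolderBoundOn s β K h) (hh' : HolderBoundOn s β K' h') :
    HolderBoundOn s β (K + K') (fun x => h x - h' x) := fun x hx y hy =>
  calc |(h x - h' x) - (h y - h' y)| ≤ |h x - h y| + |h' x - h' y| := by
        rw [show (h x - h' x) - (h y - h' y) = (h x - h y) - (h' x - h' y) by ring]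
        exact abs_sub _ _
    _ ≤ (K + K') * |x - y| ^ β := by
        rw [add_mul]; exact add_le_add (hh x hx y hy) (hh' x hx y hy)

theorem holderSeminormOn (hh : HolderBoundOn s β K h) (hβ : 0 < β) :
    HolderBoundOn s β (holderSeminormOn s β h) h := by
  have hbdd : BddAbove {r : ℝ | ∃ x ∈ s, ∃ y ∈ s, x ≠ y ∧ r = |h x - h y| / |x - y| ^ β} := by
    refine ⟨K, ?_⟩
    rintro _ ⟨x, hx, y, hy, hxy, rfl⟩
    rw [div_le_iff₀ (by positivity [sub_ne_zero.mpr hxy])]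
    exact hh x hx y hy
  intro x hx y hy
  rcases eq_or_ne x y with rfl | hxy
  · simp [Real.zero_rpow hβ.ne']
  · rw [← div_le_iff₀ (by positivity [sub_ne_zero.mpr hxy])]
    exact le_csSup hbdd ⟨x, hx, y, hy, hxy, rfl⟩

theorem abs_le_supNormOn {a b : ℝ} (hh : HolderBoundOn (Icc a b) β K h) (hβ : 0 ≤ β)
    {x : ℝ} (hx : x ∈ Icc a b) : |h x| ≤ supNormOn (Icc a b) h := by
  refine le_csSup ⟨|h a| + |K| * (b - a) ^ β, ?_⟩ ⟨x, hx, rfl⟩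
  rintro _ ⟨y, hy, rfl⟩
  have hya : |y - a| ≤ b - a := by rw [abs_of_nonneg (by linarith [hy.1])]; linarith [hy.2]
  calc |h y| ≤ |h a| + |h y - h a| := by
        have := abs_sub_abs_le_abs_sub (h y) (h a); linarith
    _ ≤ |h a| + |K| * (b - a) ^ β := by
        gcongr
        calc |h y - h a| ≤ K * |y - a| ^ β := hh y hy a ⟨le_rfl, hy.1.trans hy.2⟩
          _ ≤ |K| * (b - a) ^ β := by
            gcongr
            exact le_abs_self K

end HolderBoundOn

theorem riemannSum_two_mul (f g : ℝ → ℝ) (t : ℕ → ℝ) (m : ℕ) :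
    riemannSum f g t (2 * m) = riemannSum f g (fun i => t (2 * i)) m +
      ∑ i ∈ Finset.range m,
        (f (t (2 * i + 1)) - f (t (2 * i))) * (g (t (2 * i + 2)) - g (t (2 * i + 1))) := by
  induction m with
  | zero => simp [riemannSum]
  | succ m ih =>
    simp only [riemannSum, show 2 * (m + 1) = 2 * m + 1 + 1 by ring, Finset.sum_range_succ]
      at ih ⊢
    rw [ih, show 2 * m + 1 + 1 = 2 * m + 2 by ring]
    ring

theorem riemannSum_sub_riemannSum (f f₀ g g₀ : ℝ → ℝ) (t : ℕ → ℝ) (n : ℕ) :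
    riemannSum f g t n - riemannSum f₀ g₀ t n =
      riemannSum (fun x => f x - f₀ x) (fun x => g x - g₀ x) t n +
        riemannSum (fun x => f x - f₀ x) g₀ t n + riemannSum f₀ (fun x => g x - g₀ x) t n := by
  simp only [riemannSum, ← Finset.sum_sub_distrib, ← Finset.sum_add_distrib]
  exact Finset.sum_congr rfl fun _ _ => by ring

noncomputable def dyadicPartition (a b : ℝ) (k i : ℕ) : ℝ :=
  a + (b - a) * i / 2 ^ k

section Dyadic

variable {a b : ℝ}

theorem dyadicPartition_succ_two_mul (k i : ℕ) :
    dyadicPartition a b (k + 1) (2 * i) = dyadicPartition a b k i := by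
  simp only [dyadicPartition, pow_succ]; push_cast; field_simp

theorem dyadicPartition_add_one_sub (k i : ℕ) :
    dyadicPartition a b k (i + 1) - dyadicPartition a b k i = (b - a) / 2 ^ k := by
  simp only [dyadicPartition]; push_cast; ring

theorem isPartition_dyadicPartition (hab : a < b) (k : ℕ) :
    IsPartition a b (dyadicPartition a b k) (2 ^ k) := by
  refine ⟨by simp [dyadicPartition], by simp [dyadicPartition], fun i _ => ?_⟩
  rw [← sub_pos, dyadicPartition_add_one_sub]
  exact div_pos (sub_pos.2 hab) (by positivity)

theorem dyadicPartition_mem_Icc (hab : a ≤ b) {k i : ℕ} (hi : i ≤ 2 ^ k) :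
    dyadicPartition a b k i ∈ Icc a b := by
  have hi' : (i : ℝ) / 2 ^ k ≤ 1 := div_le_one_of_le₀ (by exact_mod_cast hi) (by positivity)
  have hba : 0 ≤ b - a := sub_nonneg.2 hab
  constructor <;> simp only [dyadicPartition, mul_div_assoc]
  · nlinarith [show 0 ≤ (i : ℝ) / 2 ^ k by positivity]
  · nlinarith

theorem dyadicPartition_mesh_le (δ : ℝ) (hδ : 0 < δ) :
    ∃ K : ℕ, ∀ k ≥ K, ∀ i < 2 ^ k,
      dyadicPartition a b k (i + 1) - dyadicPartition a b k i ≤ δ := by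
  have hlim : Tendsto (fun k : ℕ => (b - a) / 2 ^ k) atTop (𝓝 0) :=
    tendsto_const_nhds.div_atTop (tendsto_pow_atTop_atTop_of_one_lt one_lt_two)
  obtain ⟨K, hK⟩ := eventually_atTop.1 (hlim.eventually (ge_mem_nhds hδ))
  exact ⟨K, fun k hk i _ => (dyadicPartition_add_one_sub k i).trans_le (hK k hk)⟩

end Dyadic

theorem two_lt_two_rpow {p : ℝ} (hp : 1 < p) : (2 : ℝ) < 2 ^ p := by
  simpa using (Real.rpow_lt_rpow_left_iff one_lt_two).2 hp

section Sewing

variable {a b β γ Kh Kg : ℝ} {h G : ℝ → ℝ}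

theorem abs_riemannSum_dyadic_succ_sub_le (hab : a < b) (hh : HolderBoundOn (Icc a b) β Kh h)
    (hG : HolderBoundOn (Icc a b) γ Kg G) (k : ℕ) :
    |riemannSum h G (dyadicPartition a b (k + 1)) (2 ^ (k + 1)) -
        riemannSum h G (dyadicPartition a b k) (2 ^ k)| ≤
      Kh * Kg * (b - a) ^ (β + γ) / 2 ^ (β + γ) * (2 / 2 ^ (β + γ)) ^ k := by
  set t := dyadicPartition a b (k + 1)
  set d := (b - a) / 2 ^ (k + 1) with hd
  have hd0 : 0 < d := div_pos (sub_pos.2 hab) (by positivity)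
  have hmem : ∀ i ≤ 2 ^ (k + 1), t i ∈ Icc a b := fun i hi => dyadicPartition_mem_Icc hab.le hi
  have hstep : ∀ i, |t (i + 1) - t i| = d := fun i => by
    rw [dyadicPartition_add_one_sub, abs_of_pos hd0]
  have hpair : ∀ i < 2 ^ k,
      |(h (t (2 * i + 1)) - h (t (2 * i))) * (G (t (2 * i + 2)) - G (t (2 * i + 1)))| ≤
        Kh * Kg * d ^ (β + γ) := by
    intro i hi
    have hi' : 2 * i + 2 ≤ 2 ^ (k + 1) := by rw [pow_succ]; omega
    have hh' : |h (t (2 * i + 1)) - h (t (2 * i))| ≤ Kh * d ^ β := by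
      simpa only [hstep] using
        hh (t (2 * i + 1)) (hmem _ (by omega)) (t (2 * i)) (hmem _ (by omega))
    have hG' : |G (t (2 * i + 2)) - G (t (2 * i + 1))| ≤ Kg * d ^ γ := by
      simpa only [hstep] using
        hG (t (2 * i + 1 + 1)) (hmem _ hi') (t (2 * i + 1)) (hmem _ (by omega))
    rw [abs_mul, Real.rpow_add hd0]
    calc _ ≤ (Kh * d ^ β) * (Kg * d ^ γ) :=
          mul_le_mul hh' hG' (abs_nonneg _) ((abs_nonneg _).trans hh')
      _ = _ := by ring
  have hcoarse : (fun i => t (2 * i)) = dyadicPartition a b k :=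
    funext fun i => dyadicPartition_succ_two_mul k i
  rw [pow_succ', riemannSum_two_mul, hcoarse, add_sub_cancel_left]
  calc _ ≤ ∑ i ∈ Finset.range (2 ^ k), Kh * Kg * d ^ (β + γ) :=
        (Finset.abs_sum_le_sum_abs _ _).trans
          (Finset.sum_le_sum fun i hi => hpair i (Finset.mem_range.1 hi))
    _ = _ := by
      rw [Finset.sum_const, Finset.card_range, nsmul_eq_mul, hd,
        Real.div_rpow (sub_pos.2 hab).le (by positivity),
        ← Real.rpow_pow_comm zero_le_two]
      push_cast
      rw [div_pow]
      field_simp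
      ring

theorem abs_riemannSum_dyadic_sub_le (hab : a < b) (hβγ : 1 < β + γ) (hKh : 0 ≤ Kh)
    (hKg : 0 ≤ Kg) (hh : HolderBoundOn (Icc a b) β Kh h) (hG : HolderBoundOn (Icc a b) γ Kg G)
    (k : ℕ) :
    |riemannSum h G (dyadicPartition a b k) (2 ^ k) - h a * (G b - G a)| ≤
      Kh * Kg * ((b - a) ^ (β + γ) / (2 ^ (β + γ) - 2)) := by
  set q : ℝ := 2 ^ (β + γ)
  have hq : 2 < q := two_lt_two_rpow hβγ
  have hq0 : 0 < q := by linarith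
  have hr : 2 / q < 1 := (div_lt_one hq0).2 hq
  have hcoarsest : riemannSum h G (dyadicPartition a b 0) (2 ^ 0) = h a * (G b - G a) := by
    simp [riemannSum, dyadicPartition]
  rw [← hcoarsest, ← Finset.sum_range_sub fun j => riemannSum h G (dyadicPartition a b j) (2 ^ j)]
  calc _ ≤ ∑ j ∈ Finset.range k, Kh * Kg * (b - a) ^ (β + γ) / q * (2 / q) ^ j :=
        (Finset.abs_sum_le_sum_abs _ _).trans
          (Finset.sum_le_sum fun j _ => abs_riemannSum_dyadic_succ_sub_le hab hh hG j)
    _ = Kh * Kg * (b - a) ^ (β + γ) / q * ∑ j ∈ Finset.Ico 0 k, (2 / q) ^ j := by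
        rw [Finset.mul_sum, Finset.range_eq_Ico]
    _ ≤ Kh * Kg * (b - a) ^ (β + γ) / q * ((2 / q) ^ 0 / (1 - 2 / q)) := by
        gcongr
        exact geom_sum_Ico_le_of_lt_one (by positivity) hr
    _ = _ := by
      have : q - 2 ≠ 0 := by linarith
      field_simp

end Sewing

noncomputable def youngConstant (a b β γ : ℝ) : ℝ :=
  (b - a) ^ γ + (b - a) ^ (β + γ) / (2 ^ (β + γ) - 2)

section YoungBounds

variable {a b β γ : ℝ}

theorem abs_riemannSum_dyadic_le (hab : a < b) (hβ : 0 < β) (hγ : 0 < γ) (hβγ : 1 < β + γ)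
    {Kh Kg : ℝ} {h G : ℝ → ℝ} (hh : HolderBoundOn (Icc a b) β Kh h)
    (hG : HolderBoundOn (Icc a b) γ Kg G) (k : ℕ) :
    |riemannSum h G (dyadicPartition a b k) (2 ^ k)| ≤
      youngConstant a b β γ * holderNorm a b β h * holderNorm a b γ G := by
  have mema : a ∈ Icc a b := ⟨le_rfl, hab.le⟩
  have memb : b ∈ Icc a b := ⟨hab.le, le_rfl⟩
  set sh := supNormOn (Icc a b) h
  set σh := holderSeminormOn (Icc a b) β h
  set σG := holderSeminormOn (Icc a b) γ G
  set C := (b - a) ^ (β + γ) / (2 ^ (β + γ) - 2)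
  have hsh : 0 ≤ sh := supNormOn_nonneg _ _
  have hσh : 0 ≤ σh := holderSeminormOn_nonneg _ _ _
  have hσG : 0 ≤ σG := holderSeminormOn_nonneg _ _ _
  have hpow : 0 ≤ (b - a) ^ γ := Real.rpow_nonneg (sub_pos.2 hab).le _
  have hC : 0 ≤ C :=
    div_nonneg (Real.rpow_nonneg (sub_pos.2 hab).le _) (sub_nonneg.2 (two_lt_two_rpow hβγ).le)
  have hsew := abs_riemannSum_dyadic_sub_le hab hβγ hσh hσG (hh.holderSeminormOn hβ)
    (hG.holderSeminormOn hγ) k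
  have hend : |h a * (G b - G a)| ≤ sh * (σG * (b - a) ^ γ) := by
    rw [abs_mul]
    refine mul_le_mul (hh.abs_le_supNormOn hβ.le mema) ?_ (abs_nonneg _) hsh
    simpa [abs_of_pos (sub_pos.2 hab)] using hG.holderSeminormOn hγ b memb a mema
  calc _ = |(riemannSum h G (dyadicPartition a b k) (2 ^ k) - h a * (G b - G a))
          + h a * (G b - G a)| := by rw [sub_add_cancel]
    _ ≤ _ := abs_add_le _ _
    _ ≤ σh * σG * C + sh * (σG * (b - a) ^ γ) := add_le_add hsew hend
    _ ≤ youngConstant a b β γ * (sh + σh) * σG := by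
        rw [youngConstant]
        nlinarith [mul_nonneg (mul_nonneg hsh hσG) hC,
          mul_nonneg (mul_nonneg hσh hσG) hpow]
    _ ≤ youngConstant a b β γ * holderNorm a b β h * holderNorm a b γ G := by
        rw [holderNorm_eq a b β h]
        exact mul_le_mul_of_nonneg_left (holderSeminormOn_le_holderNorm a b γ G)
          (mul_nonneg (add_nonneg hpow hC) (add_nonneg hsh hσh))

theorem abs_sub_le_of_isYoungIntegral (hab : a < b) (hβ : 0 < β) (hγ : 0 < γ)
    (hβγ : 1 < β + γ) {f f₀ g g₀ : ℝ → ℝ} {Kf Kf₀ Kg Kg₀ I I₀ : ℝ}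
    (hf : HolderBoundOn (Icc a b) β Kf (fun x => f x - f₀ x))
    (hf₀ : HolderBoundOn (Icc a b) β Kf₀ f₀)
    (hg : HolderBoundOn (Icc a b) γ Kg (fun x => g x - g₀ x))
    (hg₀ : HolderBoundOn (Icc a b) γ Kg₀ g₀)
    (hI : IsYoungIntegral a b f g I) (hI₀ : IsYoungIntegral a b f₀ g₀ I₀) :
    |I - I₀| ≤ youngConstant a b β γ *
      (holderNorm a b β (fun x => f x - f₀ x) * holderNorm a b γ (fun x => g x - g₀ x) +
        holderNorm a b β (fun x => f x - f₀ x) * holderNorm a b γ g₀ +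
        holderNorm a b β f₀ * holderNorm a b γ (fun x => g x - g₀ x)) := by
  have hlim := ((hI _ _ (isPartition_dyadicPartition hab) dyadicPartition_mesh_le).sub
    (hI₀ _ _ (isPartition_dyadicPartition hab) dyadicPartition_mesh_le)).abs
  refine le_of_tendsto hlim (Eventually.of_forall fun k => ?_)
  rw [riemannSum_sub_riemannSum, mul_add, mul_add, ← mul_assoc, ← mul_assoc, ← mul_assoc]
  refine (abs_add_le _ _).trans (add_le_add ((abs_add_le _ _).trans (add_le_add ?_ ?_)) ?_)
  · exact abs_riemannSum_dyadic_le hab hβ hγ hβγ hf hg k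
  · exact abs_riemannSum_dyadic_le hab hβ hγ hβγ hf hg₀ k
  · exact abs_riemannSum_dyadic_le hab hβ hγ hβγ hf₀ hg k

end YoungBounds
/-- Continuity of the Young integral: if `f_n → f` in `C^β` and `g_n → g` in
`C^γ` on `[a,b]` with `β + γ > 1`, all functions being Hölder of the respective
exponents, then `∫_a^b f_n dg_n → ∫_a^b f dg`. -/
theorem stmt4 (β γ : ℝ) (hβ : β ∈ Ioc (0 : ℝ) 1) (hγ : γ ∈ Ioc (0 : ℝ) 1)
    (hβγ : 1 < β + γ) (a b : ℝ) (hab : a < b)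
    (f : ℕ → ℝ → ℝ) (f₀ : ℝ → ℝ) (g : ℕ → ℝ → ℝ) (g₀ : ℝ → ℝ)
    (hf : ∀ n, ∃ K : ℝ, ∀ x ∈ Icc a b, ∀ y ∈ Icc a b, |f n x - f n y| ≤ K * |x - y| ^ β)
    (hf₀ : ∃ K : ℝ, ∀ x ∈ Icc a b, ∀ y ∈ Icc a b, |f₀ x - f₀ y| ≤ K * |x - y| ^ β)
    (hg : ∀ n, ∃ K : ℝ, ∀ x ∈ Icc a b, ∀ y ∈ Icc a b, |g n x - g n y| ≤ K * |x - y| ^ γ)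
    (hg₀ : ∃ K : ℝ, ∀ x ∈ Icc a b, ∀ y ∈ Icc a b, |g₀ x - g₀ y| ≤ K * |x - y| ^ γ)
    (hfconv : Tendsto (fun n => holderNorm a b β (fun x => f n x - f₀ x)) atTop (𝓝 0))
    (hgconv : Tendsto (fun n => holderNorm a b γ (fun x => g n x - g₀ x)) atTop (𝓝 0))
    (I : ℕ → ℝ) (I₀ : ℝ)
    (hI : ∀ n, IsYoungIntegral a b (f n) (g n) (I n))
    (hI₀ : IsYoungIntegral a b f₀ g₀ I₀) :
    Tendsto I atTop (𝓝 I₀) := by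
  obtain ⟨Kf₀, hKf₀⟩ := hf₀
  obtain ⟨Kg₀, hKg₀⟩ := hg₀
  have hbound : ∀ n, |I n - I₀| ≤ youngConstant a b β γ *
      (holderNorm a b β (fun x => f n x - f₀ x) * holderNorm a b γ (fun x => g n x - g₀ x) +
        holderNorm a b β (fun x => f n x - f₀ x) * holderNorm a b γ g₀ +
        holderNorm a b β f₀ * holderNorm a b γ (fun x => g n x - g₀ x)) := fun n => by
    obtain ⟨Kf, hKf⟩ := hf n
    obtain ⟨Kg, hKg⟩ := hg n
    exact abs_sub_le_of_isYoungIntegral hab hβ.1 hγ.1 hβγ (HolderBoundOn.sub hKf hKf₀) hKf₀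
      (HolderBoundOn.sub hKg hKg₀) hKg₀ (hI n) hI₀
  have hlim := (((hfconv.mul hgconv).add (hfconv.mul_const (holderNorm a b γ g₀))).add
    (hgconv.const_mul (holderNorm a b β f₀))).const_mul (youngConstant a b β γ)
  simp only [mul_zero, zero_mul, add_zero] at hlim
  exact tendsto_iff_dist_tendsto_zero.2 <|
    squeeze_zero (fun _ => dist_nonneg) (fun n => (hbound n).trans_eq' (Real.dist_eq _ _)) hlim
end

section
/- Let β, γ ∈ (0,1] with β + γ > 1, let f be β-Hölder and g be γ-Hölder on [a,b], and for n ≥ 1 let t_i := a + i(b−a)/n, i = 0,…,n, be the uniform partition. Then there is a constant C_{β,γ} depending only on β and γ such that |∫_a^b f dg − Σ_{i=0}^{n−1} f(t_i)(g(t_{i+1}) − g(t_i))| ≤ C_{β,γ}·[f]_β·[g]_γ·(b−a)^{β+γ}·n^{1−β−γ}. -/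
/-! Halving the mesh of the uniform partition into `m` cells changes the Riemann sum by
`∑ᵢ (f t₂ᵢ₊₁ - f t₂ᵢ) (g t₂ᵢ₊₂ - g t₂ᵢ₊₁)`, a sum of `m` products of increments over cells of
length `(b - a) / (2m)`, hence by at most `[f]_β [g]_γ ((b - a) / 2) ^ (β + γ) m ^ (1 - β - γ)`.
Along the dyadic refinements `n 2ᵏ` these corrections decay geometrically with ratio
`2 ^ (1 - β - γ) < 1`, and the Riemann sums converge to the Young integral, so summing the
geometric series gives the bound with `C = 1 / (2 ^ (β + γ) - 2)`. -/

open MeasureTheory Filter Set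
open scoped Topology

noncomputable def uniformPartition (a b : ℝ) (n i : ℕ) : ℝ :=
  a + i * (b - a) / n

lemma uniformPartition_zero (a b : ℝ) (n : ℕ) : uniformPartition a b n 0 = a := by
  simp [uniformPartition]

lemma uniformPartition_self (a b : ℝ) {n : ℕ} (hn : n ≠ 0) : uniformPartition a b n n = b := by
  rw [uniformPartition, mul_div_cancel_left₀ _ (Nat.cast_ne_zero.2 hn), add_sub_cancel]

lemma uniformPartition_succ_sub (a b : ℝ) {n : ℕ} (hn : n ≠ 0) (i : ℕ) :
    uniformPartition a b n (i + 1) - uniformPartition a b n i = (b - a) / n := by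
  simp only [uniformPartition, Nat.cast_add, Nat.cast_one]
  field_simp
  ring

lemma uniformPartition_two_mul (a b : ℝ) (n i : ℕ) :
    uniformPartition a b (2 * n) (2 * i) = uniformPartition a b n i := by
  simp only [uniformPartition, Nat.cast_mul, Nat.cast_ofNat]
  rw [mul_assoc, mul_div_mul_left _ _ two_ne_zero]

lemma uniformPartition_mem_Icc {a b : ℝ} {n i : ℕ} (hab : a ≤ b) (hi : i ≤ n) :
    uniformPartition a b n i ∈ Icc a b := by
  rcases n.eq_zero_or_pos with rfl | hn
  · simp [uniformPartition, hab]
  have hin : (i : ℝ) / n ≤ 1 := div_le_one_of_le₀ (by exact_mod_cast hi) n.cast_nonneg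
  have hba : 0 ≤ b - a := sub_nonneg.2 hab
  rw [uniformPartition, mul_div_right_comm]
  constructor <;> nlinarith [div_nonneg i.cast_nonneg (n.cast_nonneg : (0 : ℝ) ≤ n)]

lemma isPartition_uniformPartition {a b : ℝ} {n : ℕ} (hab : a < b) (hn : n ≠ 0) :
    IsPartition a b (uniformPartition a b n) n := by
  refine ⟨uniformPartition_zero a b n, uniformPartition_self a b hn, fun i _ => ?_⟩
  have : 0 < (b - a) / n := div_pos (sub_pos.2 hab) (by positivity)
  linarith [uniformPartition_succ_sub a b hn i]

lemma IsYoungIntegral.tendsto_riemannSum_uniformPartition {a b I : ℝ} {f g : ℝ → ℝ}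
    (hI : IsYoungIntegral a b f g I) (hab : a < b) {m : ℕ → ℕ} (hm0 : ∀ k, m k ≠ 0)
    (hm : Tendsto m atTop atTop) :
    Tendsto (fun k => riemannSum f g (uniformPartition a b (m k)) (m k)) atTop (𝓝 I) := by
  refine hI _ _ (fun k => isPartition_uniformPartition hab (hm0 k)) fun δ hδ => ?_
  have hmesh : Tendsto (fun k => (b - a) / (m k : ℝ)) atTop (𝓝 0) :=
    tendsto_const_nhds.div_atTop (tendsto_natCast_atTop_atTop.comp hm)
  obtain ⟨K, hK⟩ := eventually_atTop.1 (hmesh.eventually (ge_mem_nhds hδ))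
  exact ⟨K, fun k hk i _ => (uniformPartition_succ_sub a b (hm0 k) i).trans_le (hK k hk)⟩

lemma riemannSum_two_mul_sub_riemannSum (f g : ℝ → ℝ) (t : ℕ → ℝ) (m : ℕ) :
    riemannSum f g t (2 * m) - riemannSum f g (fun i => t (2 * i)) m =
      ∑ i ∈ Finset.range m,
        (f (t (2 * i + 1)) - f (t (2 * i))) * (g (t (2 * i + 2)) - g (t (2 * i + 1))) := by
  induction m with
  | zero => simp [riemannSum]
  | succ m ih =>
    rw [Finset.sum_range_succ, ← ih, show 2 * (m + 1) = 2 * m + 1 + 1 by ring]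
    simp only [riemannSum, Finset.sum_range_succ]
    ring_nf

lemma abs_riemannSum_uniformPartition_two_mul_sub_le {a b β γ Kf Kg : ℝ} {f g : ℝ → ℝ}
    (hab : a < b)
    (hf : ∀ x ∈ Icc a b, ∀ y ∈ Icc a b, |f x - f y| ≤ Kf * |x - y| ^ β)
    (hg : ∀ x ∈ Icc a b, ∀ y ∈ Icc a b, |g x - g y| ≤ Kg * |x - y| ^ γ) {m : ℕ} (hm : m ≠ 0) :
    |riemannSum f g (uniformPartition a b (2 * m)) (2 * m) -
        riemannSum f g (uniformPartition a b m) m|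
      ≤ Kf * Kg * ((b - a) / 2) ^ (β + γ) * (m : ℝ) ^ (1 - (β + γ)) := by
  set t := uniformPartition a b (2 * m)
  set h : ℝ := (b - a) / (2 * m : ℕ)
  have hh : 0 < h := div_pos (sub_pos.2 hab) (by positivity)
  have hstep (i : ℕ) : |t (i + 1) - t i| = h := by
    rw [uniformPartition_succ_sub a b (by omega) i, abs_of_pos hh]
  have hmem {i : ℕ} (hi : i ≤ 2 * m) : t i ∈ Icc a b := uniformPartition_mem_Icc hab.le hi
  have hcell {i : ℕ} (hi : i < m) :
      |(f (t (2 * i + 1)) - f (t (2 * i))) * (g (t (2 * i + 2)) - g (t (2 * i + 1)))|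
        ≤ Kf * Kg * h ^ (β + γ) := by
    have hfi := hf _ (hmem (by omega : 2 * i + 1 ≤ 2 * m)) _ (hmem (by omega : 2 * i ≤ 2 * m))
    have hgi :=
      hg _ (hmem (by omega : 2 * i + 1 + 1 ≤ 2 * m)) _ (hmem (by omega : 2 * i + 1 ≤ 2 * m))
    rw [hstep] at hfi hgi
    rw [abs_mul, Real.rpow_add hh]
    calc _ ≤ Kf * h ^ β * (Kg * h ^ γ) :=
          mul_le_mul hfi hgi (abs_nonneg _) ((abs_nonneg _).trans hfi)
      _ = _ := by ring
  have hcoarse : uniformPartition a b m = fun i => t (2 * i) :=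
    funext fun i => (uniformPartition_two_mul a b m i).symm
  have hm' : (0 : ℝ) < m := by positivity
  calc _ = |∑ i ∈ Finset.range m,
          (f (t (2 * i + 1)) - f (t (2 * i))) * (g (t (2 * i + 2)) - g (t (2 * i + 1)))| := by
        rw [hcoarse, riemannSum_two_mul_sub_riemannSum]
    _ ≤ ∑ i ∈ Finset.range m,
          |(f (t (2 * i + 1)) - f (t (2 * i))) * (g (t (2 * i + 2)) - g (t (2 * i + 1)))| :=
        Finset.abs_sum_le_sum_abs _ _
    _ ≤ ∑ _i ∈ Finset.range m, Kf * Kg * h ^ (β + γ) :=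
        Finset.sum_le_sum fun i hi => hcell (Finset.mem_range.1 hi)
    _ = Kf * Kg * ((b - a) / 2) ^ (β + γ) * (m : ℝ) ^ (1 - (β + γ)) := by
        have hba : 0 ≤ (b - a) / 2 := by linarith
        rw [Finset.sum_const, Finset.card_range, nsmul_eq_mul,
          show h = (b - a) / 2 / m by push_cast [h]; rw [div_div],
          Real.div_rpow hba hm'.le, Real.rpow_sub hm', Real.rpow_one]
        field_simp

theorem stmt5_general (β γ : ℝ) (hβγ : 1 < β + γ) :
    ∃ C : ℝ, 0 < C ∧
      ∀ (a b : ℝ), a < b →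
        ∀ (f g : ℝ → ℝ) (Kf Kg : ℝ), 0 ≤ Kf → 0 ≤ Kg →
          (∀ x ∈ Icc a b, ∀ y ∈ Icc a b, |f x - f y| ≤ Kf * |x - y| ^ β) →
          (∀ x ∈ Icc a b, ∀ y ∈ Icc a b, |g x - g y| ≤ Kg * |x - y| ^ γ) →
          ∀ I : ℝ, IsYoungIntegral a b f g I →
            ∀ n : ℕ, 0 < n →
              |I - riemannSum f g (fun i : ℕ => a + (i : ℝ) * (b - a) / (n : ℝ)) n|
                ≤ C * Kf * Kg * (b - a) ^ (β + γ) * (n : ℝ) ^ (1 - β - γ) := by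
  set s := β + γ
  have htwo : (2 : ℝ) < 2 ^ s := by simpa using Real.rpow_lt_rpow_of_exponent_lt one_lt_two hβγ
  refine ⟨(2 ^ s - 2)⁻¹, inv_pos.2 (sub_pos.2 htwo), ?_⟩
  intro a b hab f g Kf Kg _ _ hf hg I hI n hn
  set r : ℝ := 2 ^ (1 - s)
  have hr : r < 1 := Real.rpow_lt_one_of_one_lt_of_neg one_lt_two (by linarith)
  set S : ℕ → ℝ := fun k => riemannSum f g (uniformPartition a b (n * 2 ^ k)) (n * 2 ^ k)
  have hS : Tendsto S atTop (𝓝 I) :=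
    hI.tendsto_riemannSum_uniformPartition hab (fun k => by positivity)
      (tendsto_pow_atTop_atTop_of_one_lt one_lt_two |>.const_mul_atTop' hn)
  have hstep (k : ℕ) :
      dist (S k) (S (k + 1)) ≤ Kf * Kg * ((b - a) / 2) ^ s * (n : ℝ) ^ (1 - s) * r ^ k := by
    rw [dist_comm, Real.dist_eq]
    simp only [S, show n * 2 ^ (k + 1) = 2 * (n * 2 ^ k) by ring]
    refine (abs_riemannSum_uniformPartition_two_mul_sub_le hab hf hg (by positivity)).trans_eq ?_
    push_cast
    rw [Real.mul_rpow (by positivity) (by positivity), ← Real.rpow_pow_comm zero_le_two]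
    ring
  have hlim := dist_le_of_le_geometric_of_tendsto₀ r _ hr hstep hS
  simp only [S, pow_zero, mul_one, Real.dist_eq, abs_sub_comm] at hlim
  refine hlim.trans_eq ?_
  have h2s : (2 : ℝ) ^ s - 2 ≠ 0 := (sub_pos.2 htwo).ne'
  rw [show 1 - β - γ = 1 - s by ring, Real.div_rpow (sub_pos.2 hab).le zero_le_two,
    show r = 2 ^ (1 : ℝ) / 2 ^ s from Real.rpow_sub two_pos 1 s, Real.rpow_one]
  field_simp

/-- Quantitative error bound for the approximation of the Young integral
`∫_a^b f dg` by the left-endpoint Riemann sum over the uniform partition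
`t_i = a + i(b-a)/n`: the error is at most
`C_{β,γ}·[f]_β·[g]_γ·(b−a)^{β+γ}·n^{1−β−γ}` with `C_{β,γ}` depending only on
`β` and `γ`. -/
theorem stmt5 (β γ : ℝ) (hβ : β ∈ Ioc (0 : ℝ) 1) (hγ : γ ∈ Ioc (0 : ℝ) 1)
    (hβγ : 1 < β + γ) :
    ∃ C : ℝ, 0 < C ∧
      ∀ (a b : ℝ), a < b →
        ∀ (f g : ℝ → ℝ) (Kf Kg : ℝ), 0 ≤ Kf → 0 ≤ Kg →
          (∀ x ∈ Icc a b, ∀ y ∈ Icc a b, |f x - f y| ≤ Kf * |x - y| ^ β) →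
          (∀ x ∈ Icc a b, ∀ y ∈ Icc a b, |g x - g y| ≤ Kg * |x - y| ^ γ) →
          ∀ I : ℝ, IsYoungIntegral a b f g I →
            ∀ n : ℕ, 0 < n →
              |I - riemannSum f g (fun i : ℕ => a + (i : ℝ) * (b - a) / (n : ℝ)) n|
                ≤ C * Kf * Kg * (b - a) ^ (β + γ) * (n : ℝ) ^ (1 - β - γ) :=
  stmt5_general β γ hβγ
end

section
/- Let t > 0, let b : [0,t] → ℝ be continuous, and let ℓ : ℝ → ℝ be a γ-Hölder continuous function (γ ∈ (0,1]) with compact support contained in the open interval (−M, M), satisfying the occupation density formula ∫_0^t φ(b_s) ds = ∫_ℝ φ(y)·ℓ(y) dy for every bounded Borel measurable φ : ℝ → ℝ. Let a : ℝ → ℝ be continuous, let α ∈ (0,1), ε > 0, and define W(y) := ε^{−α/2}·∫_0^y a(z/ε) dz. Then the Young integral of ℓ against W over [−M, M] satisfies ∫_{−M}^{M} ℓ dW = ε^{−α/2}·∫_0^t a(b_s/ε) ds. -/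
/-!
Since `W` is an antiderivative of the continuous function `w = ε^{-α/2} a(·/ε)`, each term
`ℓ(tᵢ) (W(tᵢ₊₁) - W(tᵢ))` of a Riemann sum differs from `∫_{tᵢ}^{tᵢ₊₁} ℓ w` by at most the
oscillation of `ℓ` over the cell times `sup |w|` times the cell length. The Hölder function `ℓ` is
uniformly continuous on `[-M, M]`, so the Riemann sums converge to `∫_{-M}^{M} ℓ w` as the mesh
tends to `0`. The occupation density formula, applied to `w` truncated outside an interval
containing both the range of `b` and the support of `ℓ`, turns `∫ ℓ w` into
`ε^{-α/2} ∫_0^t a(b_s/ε) ds`.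
-/

open MeasureTheory Filter Set
open scoped Topology

theorem continuous_of_dist_le_mul_rpow {X Y : Type*} [PseudoMetricSpace X] [PseudoMetricSpace Y]
    {f : X → Y} {K γ : ℝ} (hγ : 0 < γ) (hf : ∀ x y, dist (f x) (f y) ≤ K * dist x y ^ γ) :
    Continuous f := by
  refine continuous_iff_continuousAt.2 fun x => tendsto_iff_dist_tendsto_zero.2 ?_
  have hbound : Tendsto (fun y => K * dist y x ^ γ) (𝓝 x) (𝓝 0) := by
    have := (((continuous_id.dist (continuous_const (y := x))).rpow_const
      fun _ => Or.inr hγ.le).const_mul K).tendsto x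
    simpa [Real.zero_rpow hγ.ne'] using this
  exact squeeze_zero (fun _ => dist_nonneg) (fun y => hf y x) hbound

namespace IsPartition

variable {a b : ℝ} {t : ℕ → ℝ} {n : ℕ}

theorem le_of_le (h : IsPartition a b t n) {i j : ℕ} (hij : i ≤ j) (hj : j ≤ n) : t i ≤ t j := by
  induction j, hij using Nat.le_induction with
  | base => exact le_rfl
  | succ j _ ih => exact (ih (by omega)).trans (h.2.2 j (by omega)).le

theorem mem_Icc_s7 (h : IsPartition a b t n) {i : ℕ} (hi : i ≤ n) : t i ∈ Icc a b :=
  ⟨h.1 ▸ h.le_of_le (Nat.zero_le i) hi, h.2.1 ▸ h.le_of_le hi le_rfl⟩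

theorem left_le_right (h : IsPartition a b t n) : a ≤ b :=
  nonempty_Icc.1 ⟨_, h.mem_Icc_s7 le_rfl⟩

theorem uIcc_subset_Icc (h : IsPartition a b t n) {i : ℕ} (hi : i < n) :
    uIcc (t i) (t (i + 1)) ⊆ Icc a b :=
  Set.uIcc_subset_Icc (h.mem_Icc_s7 hi.le) (h.mem_Icc_s7 hi)

theorem sum_sub (h : IsPartition a b t n) :
    ∑ i ∈ Finset.range n, (t (i + 1) - t i) = b - a := by
  rw [Finset.sum_range_sub, h.1, h.2.1]

end IsPartition

section RiemannStieltjes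

variable {a b : ℝ} {f g w : ℝ → ℝ}

theorem riemannSum_sub_integral_eq {t : ℕ → ℝ} {n : ℕ} (ht : IsPartition a b t n)
    (hf : ContinuousOn f (Icc a b)) (hw : ContinuousOn w (Icc a b))
    (hg : ∀ u ∈ Icc a b, ∀ v ∈ Icc a b, g v - g u = ∫ s in u..v, w s) :
    riemannSum f g t n - ∫ s in a..b, f s * w s =
      ∑ i ∈ Finset.range n, ∫ s in t i..t (i + 1), (f (t i) - f s) * w s := by
  have hfw : ∀ i < n, IntervalIntegrable (fun s => f s * w s) volume (t i) (t (i + 1)) :=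
    fun i hi => ((hf.mul hw).mono (ht.uIcc_subset_Icc hi)).intervalIntegrable
  rw [← ht.1, ← ht.2.1, ← intervalIntegral.sum_integral_adjacent_intervals hfw, riemannSum,
    ← Finset.sum_sub_distrib]
  refine Finset.sum_congr rfl fun i hi => ?_
  have hi : i < n := Finset.mem_range.1 hi
  have hw' : IntervalIntegrable (fun s => f (t i) * w s) volume (t i) (t (i + 1)) :=
    ((hw.mono (ht.uIcc_subset_Icc hi)).intervalIntegrable).const_mul _
  rw [hg _ (ht.mem_Icc_s7 hi.le) _ (ht.mem_Icc_s7 hi), ← intervalIntegral.integral_const_mul,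
    ← intervalIntegral.integral_sub hw' (hfw i hi)]
  congr 1
  funext s
  ring

theorem abs_riemannSum_sub_integral_le {t : ℕ → ℝ} {n : ℕ} (ht : IsPartition a b t n)
    (hf : ContinuousOn f (Icc a b)) (hw : ContinuousOn w (Icc a b))
    (hg : ∀ u ∈ Icc a b, ∀ v ∈ Icc a b, g v - g u = ∫ s in u..v, w s) {δ η C : ℝ}
    (hmesh : ∀ i < n, t (i + 1) - t i ≤ δ)
    (hosc : ∀ x ∈ Icc a b, ∀ y ∈ Icc a b, dist x y ≤ δ → dist (f x) (f y) ≤ η)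
    (hC : ∀ x ∈ Icc a b, ‖w x‖ ≤ C) :
    |riemannSum f g t n - ∫ s in a..b, f s * w s| ≤ η * C * (b - a) := by
  rw [riemannSum_sub_integral_eq ht hf hw hg, ← ht.sum_sub, Finset.mul_sum]
  refine (Finset.abs_sum_le_sum_abs _ _).trans (Finset.sum_le_sum fun i hi => ?_)
  have hi : i < n := Finset.mem_range.1 hi
  have hlt : t i < t (i + 1) := ht.2.2 i hi
  have hcell := intervalIntegral.norm_integral_le_of_norm_le_const
    (f := fun s => (f (t i) - f s) * w s) (C := η * C) fun s hs => by
      rw [uIoc_of_le hlt.le] at hs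
      have hs' : s ∈ Icc a b := ht.uIcc_subset_Icc hi (Ioc_subset_Icc_self.trans Icc_subset_uIcc hs)
      have hdist : dist (t i) s ≤ δ := by
        rw [Real.dist_eq, abs_le]
        constructor <;> linarith [hs.1, hs.2, hmesh i hi]
      have hη : 0 ≤ η :=
        dist_nonneg.trans (hosc s hs' s hs' ((dist_self s).trans_le (dist_nonneg.trans hdist)))
      rw [norm_mul]
      exact mul_le_mul (hosc _ (ht.mem_Icc_s7 hi.le) _ hs' hdist) (hC s hs') (norm_nonneg _) hη
  rwa [abs_of_pos (sub_pos.2 hlt)] at hcell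

theorem isYoungIntegral_of_antiderivative (hf : ContinuousOn f (Icc a b))
    (hw : ContinuousOn w (Icc a b))
    (hg : ∀ u ∈ Icc a b, ∀ v ∈ Icc a b, g v - g u = ∫ s in u..v, w s) :
    IsYoungIntegral a b f g (∫ s in a..b, f s * w s) := by
  intro t n hpart hmesh
  have hab : a ≤ b := (hpart 0).left_le_right
  obtain ⟨C, hC⟩ := isCompact_Icc.exists_bound_of_continuousOn hw
  have hD : 0 < C * (b - a) + 1 := by
    nlinarith [(norm_nonneg _).trans (hC a (left_mem_Icc.2 hab))]
  have hfu :=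
    Metric.uniformContinuousOn_iff_le.1 (isCompact_Icc.uniformContinuousOn_of_continuous hf)
  refine Metric.tendsto_atTop.2 fun η hη => ?_
  obtain ⟨δ, hδ, hosc⟩ := hfu (η / (C * (b - a) + 1)) (div_pos hη hD)
  obtain ⟨K, hK⟩ := hmesh δ hδ
  refine ⟨K, fun k hk => ?_⟩
  calc dist (riemannSum f g (t k) (n k)) (∫ s in a..b, f s * w s)
      ≤ η / (C * (b - a) + 1) * C * (b - a) :=
        abs_riemannSum_sub_integral_le (hpart k) hf hw hg (hK k hk) hosc hC
    _ = η * (C * (b - a)) / (C * (b - a) + 1) := by ring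
    _ < η := by rw [div_lt_iff₀ hD]; nlinarith

end RiemannStieltjes

theorem intervalIntegral_comp_eq_integral_mul_of_occupation {t M : ℝ} {b ℓ h : ℝ → ℝ}
    (ht : 0 ≤ t) (hb : ContinuousOn b (Icc 0 t)) (hsupp : ∀ y : ℝ, y ∉ Ioo (-M) M → ℓ y = 0)
    (hocc : ∀ φ : ℝ → ℝ, Measurable φ → (∃ Cφ : ℝ, ∀ x, |φ x| ≤ Cφ) →
      ∫ s in (0 : ℝ)..t, φ (b s) = ∫ y : ℝ, φ y * ℓ y)
    (hh : Continuous h) :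
    ∫ s in (0 : ℝ)..t, h (b s) = ∫ y : ℝ, h y * ℓ y := by
  obtain ⟨B, hB⟩ := isCompact_Icc.exists_bound_of_continuousOn hb
  -- `hocc` only applies to bounded `φ`; cutting `h` off outside `[-R, R]` changes neither side.
  set R := max M B
  obtain ⟨C, hC⟩ := (isCompact_Icc (a := -R) (b := R)).exists_bound_of_continuousOn hh.continuousOn
  have hbounded : ∀ y, |(Icc (-R) R).indicator h y| ≤ max C 0 := fun y => by
    by_cases hy : y ∈ Icc (-R) R
    · rw [indicator_of_mem hy, ← Real.norm_eq_abs]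
      exact (hC y hy).trans (le_max_left _ _)
    · rw [indicator_of_notMem hy, abs_zero]
      exact le_max_right _ _
  have hrange : ∀ s ∈ uIcc 0 t, b s ∈ Icc (-R) R := fun s hs => by
    rw [uIcc_of_le ht] at hs
    exact abs_le.1 (((Real.norm_eq_abs _).symm.trans_le (hB s hs)).trans (le_max_right _ _))
  calc ∫ s in (0 : ℝ)..t, h (b s)
      = ∫ s in (0 : ℝ)..t, (Icc (-R) R).indicator h (b s) :=
        intervalIntegral.integral_congr fun s hs => (indicator_of_mem (hrange s hs) h).symm
    _ = ∫ y : ℝ, (Icc (-R) R).indicator h y * ℓ y :=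
        hocc _ (hh.measurable.indicator measurableSet_Icc) ⟨_, hbounded⟩
    _ = ∫ y : ℝ, h y * ℓ y := by
        congr 1
        funext y
        by_cases hy : y ∈ Ioo (-M) M
        · have hyR : y ∈ Icc (-R) R := by
            constructor <;> linarith [hy.1, hy.2, le_max_left M B]
          rw [indicator_of_mem hyR]
        · simp [hsupp y hy]

theorem stmt7_general (t : ℝ) (ht : 0 < t) (b : ℝ → ℝ) (hb : ContinuousOn b (Icc 0 t))
    (γ : ℝ) (hγ : γ ∈ Ioc (0 : ℝ) 1) (M : ℝ)
    (ℓ : ℝ → ℝ) (hℓ : ∃ K : ℝ, ∀ x y : ℝ, |ℓ x - ℓ y| ≤ K * |x - y| ^ γ)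
    (hsupp : ∀ y : ℝ, y ∉ Ioo (-M) M → ℓ y = 0)
    (hocc : ∀ φ : ℝ → ℝ, Measurable φ → (∃ Cφ : ℝ, ∀ x, |φ x| ≤ Cφ) →
      ∫ s in (0 : ℝ)..t, φ (b s) = ∫ y : ℝ, φ y * ℓ y)
    (a : ℝ → ℝ) (ha : Continuous a)
    (α : ℝ) (ε : ℝ)
    (W : ℝ → ℝ) (hW : ∀ y, W y = ε ^ (-(α / 2)) * ∫ z in (0 : ℝ)..y, a (z / ε)) :
    IsYoungIntegral (-M) M ℓ W (ε ^ (-(α / 2)) * ∫ s in (0 : ℝ)..t, a (b s / ε)) := by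
  obtain ⟨K, hK⟩ := hℓ
  have hℓc : Continuous ℓ :=
    continuous_of_dist_le_mul_rpow hγ.1 (K := K) (by simpa only [Real.dist_eq] using hK)
  set w : ℝ → ℝ := fun z => ε ^ (-(α / 2)) * a (z / ε)
  have hac : Continuous fun z => a (z / ε) := ha.comp (continuous_id.div_const ε)
  have hw : Continuous w := continuous_const.mul hac
  have hWw : ∀ u v, W v - W u = ∫ s in u..v, w s := fun u v => by
    rw [hW, hW, ← mul_sub, intervalIntegral.integral_interval_sub_left
      (hac.intervalIntegrable _ _) (hac.intervalIntegrable _ _),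
      intervalIntegral.integral_const_mul]
  have hsupp' : Function.support (fun y => ℓ y * w y) ⊆ Ioc (-M) M :=
    (Function.support_mul_subset_left _ _).trans fun y hy =>
      Ioo_subset_Ioc_self (not_not.1 (mt (hsupp y) hy))
  have hI : ε ^ (-(α / 2)) * ∫ s in (0 : ℝ)..t, a (b s / ε) = ∫ y in (-M)..M, ℓ y * w y :=
    calc ε ^ (-(α / 2)) * ∫ s in (0 : ℝ)..t, a (b s / ε)
        = ∫ s in (0 : ℝ)..t, w (b s) := (intervalIntegral.integral_const_mul _ _).symm
      _ = ∫ y : ℝ, w y * ℓ y :=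
          intervalIntegral_comp_eq_integral_mul_of_occupation ht.le hb hsupp hocc hw
      _ = ∫ y in (-M)..M, ℓ y * w y := by
          rw [intervalIntegral.integral_eq_integral_of_support_subset hsupp']
          congr 1
          funext y
          exact mul_comm _ _
  rw [hI]
  exact isYoungIntegral_of_antiderivative hℓc.continuousOn hw.continuousOn fun u _ v _ => hWw u v

/-- Occupation-time representation of the Feynman–Kac functional: if `ℓ` is a
`γ`-Hölder occupation density of the continuous path `b` on `[0,t]`, compactly
supported in `(-M, M)`, and `W(y) = ε^{-α/2} ∫_0^y a(z/ε) dz` for a continuous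
potential `a`, then the Young integral of `ℓ` against `W` over `[-M, M]` equals
`ε^{-α/2} ∫_0^t a(b_s/ε) ds`. -/
theorem stmt7 (t : ℝ) (ht : 0 < t) (b : ℝ → ℝ) (hb : ContinuousOn b (Icc 0 t))
    (γ : ℝ) (hγ : γ ∈ Ioc (0 : ℝ) 1) (M : ℝ) (hM : 0 < M)
    (ℓ : ℝ → ℝ) (hℓ : ∃ K : ℝ, ∀ x y : ℝ, |ℓ x - ℓ y| ≤ K * |x - y| ^ γ)
    (hsupp : ∀ y : ℝ, y ∉ Ioo (-M) M → ℓ y = 0)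
    (hocc : ∀ φ : ℝ → ℝ, Measurable φ → (∃ Cφ : ℝ, ∀ x, |φ x| ≤ Cφ) →
      ∫ s in (0 : ℝ)..t, φ (b s) = ∫ y : ℝ, φ y * ℓ y)
    (a : ℝ → ℝ) (ha : Continuous a)
    (α : ℝ) (hα : α ∈ Ioo (0 : ℝ) 1) (ε : ℝ) (hε : 0 < ε)
    (W : ℝ → ℝ) (hW : ∀ y, W y = ε ^ (-(α / 2)) * ∫ z in (0 : ℝ)..y, a (z / ε)) :
    IsYoungIntegral (-M) M ℓ W (ε ^ (-(α / 2)) * ∫ s in (0 : ℝ)..t, a (b s / ε)) :=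
  stmt7_general t ht b hb γ hγ M ℓ hℓ hsupp hocc a ha α ε W hW
end

section
/- Let α ∈ (0,1), κ > 0, and set H := 1 − α/2. Let R : ℝ → ℝ be measurable with |R(z)| ≤ min(1, C·|z|^{−α}) for all z ≠ 0 (for some constant C > 0) and lim_{|z|→∞} |z|^α·R(z) = κ. Then for all x, y ≥ 0: lim_{ε→0⁺} ε^{2H}·∫_0^{x/ε} ∫_0^{y/ε} R(u−v) du dv = (κ/(H(2H−1)))·(1/2)·(x^{2H} + y^{2H} − |x−y|^{2H}). -/
/-! Substituting `u = s/ε`, `v = t/ε` turns `ε^{2H} ∫∫ R(u - v)` into the integral of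
`ε^{-α} R((s - t)/ε)` over `(0, x] × (0, y]`. Off the diagonal this integrand tends to
`κ |s - t|^{-α}` and is dominated by `C |s - t|^{-α}`, which is integrable on the rectangle
because `α < 1`; dominated convergence and the explicit value
`∫₀ˣ ∫₀ʸ |s - t|^{-α} = (x^{2-α} + y^{2-α} - |x - y|^{2-α}) / ((1 - α)(2 - α))`
give the limit. -/

open MeasureTheory Filter Set intervalIntegral
open scoped Topology

lemma intervalIntegral.integral_comp_neg_zero {E : Type*} [NormedAddCommGroup E] [NormedSpace ℝ E]
    (f : ℝ → E) (c : ℝ) : ∫ u in 0..c, f (-u) = -∫ u in 0..-c, f u := by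
  rw [integral_comp_neg, neg_zero, integral_symm]

noncomputable def signedRpow (r c : ℝ) : ℝ := Real.sign c * |c| ^ r

lemma signedRpow_neg (r c : ℝ) : signedRpow r (-c) = -signedRpow r c := by
  simp only [signedRpow, Real.sign_neg, abs_neg, neg_mul]

lemma signedRpow_of_pos {r c : ℝ} (hc : 0 < c) : signedRpow r c = c ^ r := by
  rw [signedRpow, Real.sign_of_pos hc, abs_of_pos hc, one_mul]

lemma signedRpow_eq_max_rpow_sub {r : ℝ} (hr : 0 < r) (c : ℝ) :
    signedRpow r c = max c 0 ^ r - max (-c) 0 ^ r := by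
  rcases lt_trichotomy c 0 with hc | rfl | hc
  · rw [signedRpow, Real.sign_of_neg hc, abs_of_neg hc, max_eq_right hc.le,
      max_eq_left (neg_nonneg.2 hc.le), Real.zero_rpow hr.ne']
    ring
  · simp [signedRpow]
  · rw [signedRpow_of_pos hc, max_eq_left hc.le, max_eq_right (neg_nonpos.2 hc.le),
      Real.zero_rpow hr.ne', sub_zero]

lemma continuous_signedRpow {r : ℝ} (hr : 0 < r) : Continuous (signedRpow r) := by
  rw [funext (signedRpow_eq_max_rpow_sub hr)]
  fun_prop (disch := exact hr.le)

lemma integral_zero_eq_of_eq_rpow {r c : ℝ} (hr : -1 < r) (hc : 0 ≤ c) {f : ℝ → ℝ}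
    (hf : ∀ u, 0 < u → f u = u ^ r) : ∫ u in 0..c, f u = c ^ (r + 1) / (r + 1) := by
  rw [integral_congr_ae (ae_of_all _ fun u hu => hf u (by rw [uIoc_of_le hc] at hu; exact hu.1)),
    integral_rpow (Or.inl hr), Real.zero_rpow (by linarith), sub_zero]

lemma integral_abs_rpow {r : ℝ} (hr : -1 < r) (c : ℝ) :
    ∫ u in 0..c, |u| ^ r = signedRpow (r + 1) c / (r + 1) := by
  have hpos : ∀ c, 0 ≤ c → ∫ u in 0..c, |u| ^ r = c ^ (r + 1) / (r + 1) := fun c hc =>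
    integral_zero_eq_of_eq_rpow hr hc fun u hu => by rw [abs_of_pos hu]
  rcases lt_trichotomy c 0 with hc | rfl | hc
  · have := integral_comp_neg_zero (fun u => |u| ^ r) c
    simp only [abs_neg] at this
    rw [this, hpos _ (neg_nonneg.2 hc.le), ← signedRpow_of_pos (neg_pos.2 hc), signedRpow_neg]
    ring
  · simp [signedRpow]
  · rw [hpos c hc.le, signedRpow_of_pos hc]

lemma integral_signedRpow {r : ℝ} (hr : -1 < r) (c : ℝ) :
    ∫ u in 0..c, signedRpow r u = |c| ^ (r + 1) / (r + 1) := by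
  have hpos : ∀ c, 0 ≤ c → ∫ u in 0..c, signedRpow r u = c ^ (r + 1) / (r + 1) :=
    fun c hc => integral_zero_eq_of_eq_rpow hr hc fun u hu => signedRpow_of_pos hu
  rcases le_total 0 c with hc | hc
  · rw [hpos c hc, abs_of_nonneg hc]
  · have := integral_comp_neg_zero (signedRpow r) c
    simp only [signedRpow_neg, intervalIntegral.integral_neg, neg_inj] at this
    rw [this, hpos _ (neg_nonneg.2 hc), abs_of_nonpos hc]

lemma intervalIntegrable_abs_rpow {r : ℝ} (hr : -1 < r) (a b : ℝ) :
    IntervalIntegrable (fun u => |u| ^ r) volume a b := by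
  have h0 : ∀ c, 0 ≤ c → IntervalIntegrable (fun u => |u| ^ r) volume 0 c := fun c hc =>
    (intervalIntegrable_rpow' hr).congr_uIoo fun u hu => by
      rw [uIoo_of_le hc] at hu; simp only [abs_of_pos hu.1]
  have h : ∀ c, IntervalIntegrable (fun u => |u| ^ r) volume 0 c := fun c => by
    rcases le_total 0 c with hc | hc
    · exact h0 c hc
    · rw [IntervalIntegrable.iff_comp_neg, neg_zero]
      simpa using h0 (-c) (neg_nonneg.2 hc)
  exact (h a).symm.trans (h b)

lemma integral_abs_sub_rpow {r : ℝ} (hr : -1 < r) (s a b : ℝ) :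
    ∫ t in a..b, |s - t| ^ r =
      (signedRpow (r + 1) (s - a) - signedRpow (r + 1) (s - b)) / (r + 1) := by
  rw [integral_comp_sub_left (fun u => |u| ^ r), ← integral_interval_sub_left
    (intervalIntegrable_abs_rpow hr _ _) (intervalIntegrable_abs_rpow hr _ _),
    integral_abs_rpow hr, integral_abs_rpow hr, sub_div]

lemma integral_integral_abs_sub_rpow {r : ℝ} (hr : -1 < r) (x y : ℝ) :
    ∫ s in 0..x, ∫ t in 0..y, |s - t| ^ r =
      (|x| ^ (r + 2) + |y| ^ (r + 2) - |x - y| ^ (r + 2)) / ((r + 1) * (r + 2)) := by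
  have hS := continuous_signedRpow (r := r + 1) (by linarith)
  have hI : ∀ c, ∫ u in 0..c, signedRpow (r + 1) u = |c| ^ (r + 2) / (r + 2) := fun c => by
    rw [integral_signedRpow (by linarith), show r + 1 + 1 = r + 2 by ring]
  simp only [integral_abs_sub_rpow hr, sub_zero]
  rw [intervalIntegral.integral_div, integral_sub (hS.intervalIntegrable _ _)
    (Continuous.intervalIntegrable (by fun_prop) _ _),
    integral_comp_sub_right (signedRpow (r + 1)), zero_sub, ← integral_interval_sub_left
    (hS.intervalIntegrable 0 (x - y)) (hS.intervalIntegrable 0 (-y)), hI, hI, hI, abs_neg]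
  field_simp
  ring

lemma setIntegral_Ioc_prod_Ioc {E : Type*} [NormedAddCommGroup E] [NormedSpace ℝ E]
    {f : ℝ × ℝ → E} {a b c d : ℝ} (hab : a ≤ b) (hcd : c ≤ d)
    (hf : IntegrableOn f (Ioc a b ×ˢ Ioc c d)) :
    ∫ p in Ioc a b ×ˢ Ioc c d, f p = ∫ s in a..b, ∫ t in c..d, f (s, t) := by
  rw [Measure.volume_eq_prod] at hf ⊢
  simp only [setIntegral_prod f hf, integral_of_le hab, integral_of_le hcd]

lemma integrableOn_abs_sub_rpow {r : ℝ} (hr : -1 < r) (a b : ℝ) {c d : ℝ} (hcd : c ≤ d) :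
    IntegrableOn (fun p : ℝ × ℝ => |p.1 - p.2| ^ r) (Ioc a b ×ˢ Ioc c d) := by
  have hmeas : Measurable fun p : ℝ × ℝ => |p.1 - p.2| ^ r := by fun_prop
  rw [IntegrableOn, Measure.volume_eq_prod, ← Measure.prod_restrict,
    integrable_prod_iff hmeas.aestronglyMeasurable]
  refine ⟨ae_of_all _ fun s => ?_, ?_⟩
  · rw [← IntegrableOn, ← intervalIntegrable_iff_integrableOn_Ioc_of_le hcd]
    simpa using (intervalIntegrable_abs_rpow hr (s - c) (s - d)).comp_sub_left s
  · simp_rw [Real.norm_eq_abs, abs_of_nonneg (Real.rpow_nonneg (abs_nonneg _) _),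
      ← integral_of_le hcd, integral_abs_sub_rpow hr]
    have := continuous_signedRpow (r := r + 1) (by linarith)
    exact Continuous.integrableOn_Ioc (by fun_prop)

lemma ae_fst_sub_snd_ne_zero : ∀ᵐ p : ℝ × ℝ, p.1 - p.2 ≠ 0 := by
  rw [Measure.volume_eq_prod, Measure.ae_prod_iff_ae_ae (by measurability)]
  exact ae_of_all _ fun s => by
    simpa [sub_eq_zero, eq_comm] using (countable_singleton s).ae_notMem volume

lemma tendsto_div_nhdsGT_zero_cocompact {z : ℝ} (hz : z ≠ 0) :
    Tendsto (fun ε => z / ε) (𝓝[>] 0) (cocompact ℝ) := by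
  rw [← Metric.cobounded_eq_cocompact, ← tendsto_norm_atTop_iff_cobounded]
  refine ((tendsto_inv_nhdsGT_zero.const_mul_atTop (norm_pos_iff.2 hz))).congr' ?_
  filter_upwards [self_mem_nhdsWithin] with ε (hε : 0 < ε)
  rw [norm_div, Real.norm_of_nonneg hε.le, div_eq_mul_inv]

lemma integral_integral_comp_sub_div {E : Type*} [NormedAddCommGroup E] [NormedSpace ℝ E]
    (f : ℝ → E) {ε : ℝ} (hε : ε ≠ 0) (x y : ℝ) :
    ∫ s in 0..x, ∫ t in 0..y, f ((s - t) / ε) =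
      ε ^ 2 • ∫ u in 0..x / ε, ∫ v in 0..y / ε, f (u - v) := by
  have hinner (s : ℝ) :
      ∫ t in 0..y, f ((s - t) / ε) = ε • ∫ v in 0..y / ε, f (s / ε - v) := by
    simp_rw [sub_div]
    simpa using integral_comp_div (fun v => f (s / ε - v)) hε (a := 0) (b := y)
  simp_rw [hinner, intervalIntegral.integral_smul]
  rw [integral_comp_div (fun u => ∫ v in 0..y / ε, f (u - v)) hε, zero_div, smul_smul, sq]

noncomputable def rescaledCov (α : ℝ) (R : ℝ → ℝ) (ε z : ℝ) : ℝ := ε ^ (-α) * R (z / ε)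

section RescaledCov

variable {α : ℝ} {R : ℝ → ℝ}

lemma measurable_rescaledCov (hRm : Measurable R) (ε : ℝ) : Measurable (rescaledCov α R ε) :=
  measurable_const.mul (hRm.comp (measurable_id.div_const ε))

lemma abs_rescaledCov_le {C : ℝ} (hRb : ∀ z, z ≠ 0 → |R z| ≤ C * |z| ^ (-α)) {ε z : ℝ}
    (hε : 0 < ε) (hz : z ≠ 0) : |rescaledCov α R ε z| ≤ C * |z| ^ (-α) := by
  have hεα : 0 < ε ^ (-α) := Real.rpow_pos_of_pos hε _
  calc |rescaledCov α R ε z| = ε ^ (-α) * |R (z / ε)| := by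
        rw [rescaledCov, abs_mul, abs_of_pos hεα]
    _ ≤ ε ^ (-α) * (C * |z / ε| ^ (-α)) :=
        mul_le_mul_of_nonneg_left (hRb _ (div_ne_zero hz hε.ne')) hεα.le
    _ = C * |z| ^ (-α) := by
        rw [abs_div, abs_of_pos hε, Real.div_rpow (abs_nonneg _) hε.le]
        field_simp

lemma tendsto_rescaledCov {κ : ℝ}
    (hRlim : Tendsto (fun z => |z| ^ α * R z) (cocompact ℝ) (𝓝 κ)) {z : ℝ} (hz : z ≠ 0) :
    Tendsto (fun ε => rescaledCov α R ε z) (𝓝[>] 0) (𝓝 (κ * |z| ^ (-α))) := by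
  refine ((hRlim.comp (tendsto_div_nhdsGT_zero_cocompact hz)).mul_const (|z| ^ (-α))).congr' ?_
  filter_upwards [self_mem_nhdsWithin] with ε (hε : 0 < ε)
  have hzα : |z| ^ α ≠ 0 := (Real.rpow_pos_of_pos (abs_pos.2 hz) _).ne'
  rw [Function.comp_apply, rescaledCov, abs_div, abs_of_pos hε,
    Real.div_rpow (abs_nonneg _) hε.le, Real.rpow_neg hε.le, Real.rpow_neg (abs_nonneg _)]
  field_simp

variable {C : ℝ} {s : Set (ℝ × ℝ)}

lemma integrableOn_rescaledCov (hRm : Measurable R)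
    (hRb : ∀ z, z ≠ 0 → |R z| ≤ C * |z| ^ (-α))
    (hs : IntegrableOn (fun p : ℝ × ℝ => |p.1 - p.2| ^ (-α)) s) {ε : ℝ} (hε : 0 < ε) :
    IntegrableOn (fun p : ℝ × ℝ => rescaledCov α R ε (p.1 - p.2)) s := by
  refine (hs.const_mul C).mono'
    ((measurable_rescaledCov hRm ε).comp (by fun_prop)).aestronglyMeasurable ?_
  filter_upwards [ae_restrict_of_ae ae_fst_sub_snd_ne_zero] with p hp
  exact abs_rescaledCov_le hRb hε hp

lemma tendsto_setIntegral_rescaledCov {κ : ℝ} (hRm : Measurable R)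
    (hRb : ∀ z, z ≠ 0 → |R z| ≤ C * |z| ^ (-α))
    (hs : IntegrableOn (fun p : ℝ × ℝ => |p.1 - p.2| ^ (-α)) s)
    (hRlim : Tendsto (fun z => |z| ^ α * R z) (cocompact ℝ) (𝓝 κ)) :
    Tendsto (fun ε => ∫ p in s, rescaledCov α R ε (p.1 - p.2)) (𝓝[>] 0)
      (𝓝 (κ * ∫ p in s, |p.1 - p.2| ^ (-α))) := by
  rw [← MeasureTheory.integral_const_mul]
  have hdiag : ∀ᵐ p ∂volume.restrict s, p.1 - p.2 ≠ 0 := ae_restrict_of_ae ae_fst_sub_snd_ne_zero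
  refine tendsto_integral_filter_of_dominated_convergence (fun p => C * |p.1 - p.2| ^ (-α))
    (Eventually.of_forall fun ε =>
      ((measurable_rescaledCov hRm ε).comp (by fun_prop)).aestronglyMeasurable) ?_
    (hs.const_mul C) ?_
  · filter_upwards [self_mem_nhdsWithin] with ε hε
    filter_upwards [hdiag] with p hp using abs_rescaledCov_le hRb hε hp
  · filter_upwards [hdiag] with p hp using tendsto_rescaledCov hRlim hp

end RescaledCov

lemma setIntegral_rescaledCov_eq {α C : ℝ} {R : ℝ → ℝ} (hα : α < 1) (hRm : Measurable R)
    (hRb : ∀ z, z ≠ 0 → |R z| ≤ C * |z| ^ (-α)) {ε x y : ℝ} (hε : 0 < ε) (hx : 0 ≤ x)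
    (hy : 0 ≤ y) :
    ∫ p in Ioc 0 x ×ˢ Ioc 0 y, rescaledCov α R ε (p.1 - p.2) =
      ε ^ (2 - α) * ∫ u in 0..x / ε, ∫ v in 0..y / ε, R (u - v) := by
  rw [setIntegral_Ioc_prod_Ioc hx hy (integrableOn_rescaledCov hRm hRb
    (integrableOn_abs_sub_rpow (by linarith) 0 x hy) hε)]
  simp only [rescaledCov, intervalIntegral.integral_const_mul]
  rw [integral_integral_comp_sub_div R hε.ne', smul_eq_mul, ← mul_assoc, sub_eq_neg_add,
    Real.rpow_add hε, Real.rpow_two]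

theorem stmt8_general (α : ℝ) (hα : α ∈ Ioo (0 : ℝ) 1) (κ C : ℝ)
    (H : ℝ) (hH : H = 1 - α / 2)
    (R : ℝ → ℝ) (hRm : Measurable R)
    (hRb : ∀ z : ℝ, z ≠ 0 → |R z| ≤ min 1 (C * |z| ^ (-α)))
    (hRlim : Tendsto (fun z => |z| ^ α * R z) (cocompact ℝ) (𝓝 κ))
    (x y : ℝ) (hx : 0 ≤ x) (hy : 0 ≤ y) :
    Tendsto
      (fun ε : ℝ => ε ^ (2 * H) * ∫ u in (0 : ℝ)..(x / ε), ∫ v in (0 : ℝ)..(y / ε), R (u - v))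
      (𝓝[>] (0 : ℝ))
      (𝓝 ((κ / (H * (2 * H - 1))) * (1 / 2) *
        (x ^ (2 * H) + y ^ (2 * H) - |x - y| ^ (2 * H)))) := by
  obtain ⟨hα0, hα1⟩ := hα
  have hRb' : ∀ z, z ≠ 0 → |R z| ≤ C * |z| ^ (-α) := fun z hz =>
    (hRb z hz).trans (min_le_right _ _)
  have hker := integrableOn_abs_sub_rpow (r := -α) (by linarith) 0 x hy
  have hlim := tendsto_setIntegral_rescaledCov hRm hRb' hker hRlim
  rw [setIntegral_Ioc_prod_Ioc hx hy hker, integral_integral_abs_sub_rpow (by linarith),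
    abs_of_nonneg hx, abs_of_nonneg hy] at hlim
  have h2H : 2 * H = 2 - α := by rw [hH]; ring
  convert hlim.congr' ?_ using 2
  · rw [h2H, hH, show (1 - α / 2) * (2 - α - 1) = (-α + 1) * (-α + 2) / 2 by ring,
      show (2 : ℝ) - α = -α + 2 by ring]
    field_simp
  · filter_upwards [self_mem_nhdsWithin] with ε hε
    rw [setIntegral_rescaledCov_eq hα1 hRm hRb' hε hx hy, h2H]

/-- Taqqu-type deterministic covariance asymptotics: if `|R(z)| ≤ min(1, C|z|^{-α})`
and `|z|^α R(z) → κ` as `|z| → ∞`, then for `H = 1 - α/2` and `x, y ≥ 0`,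
`ε^{2H} ∫_0^{x/ε} ∫_0^{y/ε} R(u-v) du dv → (κ/(H(2H-1)))·(1/2)(x^{2H} + y^{2H} - |x-y|^{2H})`
as `ε → 0⁺`. -/
theorem stmt8 (α : ℝ) (hα : α ∈ Ioo (0 : ℝ) 1) (κ C : ℝ) (hκ : 0 < κ) (hC : 0 < C)
    (H : ℝ) (hH : H = 1 - α / 2)
    (R : ℝ → ℝ) (hRm : Measurable R)
    (hRb : ∀ z : ℝ, z ≠ 0 → |R z| ≤ min 1 (C * |z| ^ (-α)))
    (hRlim : Tendsto (fun z => |z| ^ α * R z) (cocompact ℝ) (𝓝 κ))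
    (x y : ℝ) (hx : 0 ≤ x) (hy : 0 ≤ y) :
    Tendsto
      (fun ε : ℝ => ε ^ (2 * H) * ∫ u in (0 : ℝ)..(x / ε), ∫ v in (0 : ℝ)..(y / ε), R (u - v))
      (𝓝[>] (0 : ℝ))
      (𝓝 ((κ / (H * (2 * H - 1))) * (1 / 2) *
        (x ^ (2 * H) + y ^ (2 * H) - |x - y| ^ (2 * H)))) :=
  stmt8_general α hα κ C H hH R hRm hRb hRlim x y hx hy
end
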